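/- arXiv:1510.08830 — 2 statements merged into one kernel-verified Lean document; each statement's English description precedes it below -/
import Mathlib

section
/- Let Γ be the cyclic Neumann–Segal group associated with an arbitrary sequence (l_i) of even integers l_i ≥ 2. Then for every i ≥ 1 and every integer r with 4 ≤ r ≤ (l_{i+1}/2) − 1, the ball of radius V_i·r in Γ with respect to the generating set {α^{±1}, β^{±1}} satisfies |B_Γ(V_i r)| ≥ 2^{2^{−i−4} V_i r}, where V_i = l₁⋯l_i. -/
open scoped Pointwise

namespace Paper

/-- A symmetric (discrete) probability measure on a group. -/
def IsSymmProb {G : Type*} [Group G] (φ : G → ℝ) : Prop :=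
  (∀ g, 0 ≤ φ g) ∧ (∀ g, φ g⁻¹ = φ g) ∧ HasSum φ 1

/-- The boundary weight `φ(∂Ω) = ∑_{x ∈ Ω} ∑_{y : xy ∉ Ω} φ(y)` of a finite set `Ω`. -/
noncomputable def boundaryWeight {G : Type*} [Group G] (φ : G → ℝ) (Ω : Finset G) : ℝ :=
  ∑ x ∈ Ω, ∑' y : G, Set.indicator {y | x * y ∉ Ω} φ y

/-- The `L¹`-isoperimetric profile
`Λ₁(v) = inf {|Ω|⁻¹ φ(∂Ω) : Ω finite nonempty, |Ω| ≤ v}`. -/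
noncomputable def lambdaOne {G : Type*} [Group G] (φ : G → ℝ) (v : ℝ) : ℝ :=
  sInf ((fun Ω : Finset G => (Ω.card : ℝ)⁻¹ * boundaryWeight φ Ω) ''
    {Ω : Finset G | Ω.Nonempty ∧ (Ω.card : ℝ) ≤ v})

/-- The Dirichlet form `E_φ(f,f) = (1/2) ∑_{x,y} |f(yx) - f(x)|² φ(y)`. -/
noncomputable def dirichletForm {G : Type*} [Group G] (φ : G → ℝ) (f : G → ℝ) : ℝ :=
  (1 / 2) * ∑' p : G × G, |f (p.2 * p.1) - f p.1| ^ 2 * φ p.2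

/-- The `L²`-isoperimetric (spectral) profile. -/
noncomputable def lambdaTwo {G : Type*} [Group G] (φ : G → ℝ) (v : ℝ) : ℝ :=
  sInf ((fun f : G → ℝ => dirichletForm φ f) ''
    {f : G → ℝ | (Function.support f).Finite ∧ ((Function.support f).ncard : ℝ) ≤ v ∧
      (∑' x : G, f x ^ 2) = 1})

/-- Ball of radius `r` for the word metric associated with a (symmetric) set `S`. -/
def wordBall {G : Type*} [Group G] (S : Set G) (r : ℕ) : Set G :=
  {g | ∃ L : List G, (∀ x ∈ L, x ∈ S) ∧ L.length ≤ r ∧ L.prod = g}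

/-- Word length of `g` with respect to the set `S`. -/
noncomputable def wordLength {G : Type*} [Group G] (S : Set G) (g : G) : ℕ :=
  sInf {n : ℕ | g ∈ wordBall S n}

/-- Ball of radius `r` about `o` in the Schreier graph of the action of `Γ` on `X`
with edges given by the set `S`. -/
def schreierBall {Γ : Type*} {X : Type*} [Group Γ] [MulAction Γ X] (S : Set Γ) (o : X)
    (r : ℕ) : Set X :=
  {y | ∃ L : List Γ, (∀ g ∈ L, g ∈ S) ∧ L.length ≤ r ∧ L.prod • o = y}

/-- The inverted orbit `𝒪(w; x) = {w₁⋯w_l·x, w₁⋯w_{l-1}·x, …, w₁·x, x}` of `x` under the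
word given by the list `L = [w₁, …, w_l]`. -/
def invertedOrbit {Γ : Type*} {X : Type*} [Group Γ] [MulAction Γ X] (L : List Γ) (x : X) :
    Set X :=
  {y | ∃ j ≤ L.length, (L.take j).prod • x = y}

/-- Uniform probability measure on a set. -/
noncomputable def unifOn {G : Type*} (A : Set G) : G → ℝ :=
  A.indicator fun _ => (A.ncard : ℝ)⁻¹

open Classical in
/-- Amenability of a (discrete) group, via the Følner condition. -/
def IsAmenable (G : Type*) [Group G] : Prop :=
  ∀ (T : Finset G) (ε : ℝ), 0 < ε → ∃ F : Finset G, F.Nonempty ∧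
    ∀ s ∈ T, (((F.image fun g => s * g) \ F).card : ℝ) ≤ ε * F.card

open Classical in
/-- `n`-fold convolution power of a measure on a discrete group. -/
noncomputable def convPow {G : Type*} [Group G] (μ : G → ℝ) : ℕ → G → ℝ
  | 0 => fun g => if g = 1 then 1 else 0
  | n + 1 => fun g => ∑' h : G, μ h * convPow μ n (h⁻¹ * g)

section Wreath

/-- The restricted direct product `⊕_{x ∈ X} H`, as a subgroup of `X → H`. -/
def Lamps (X : Type*) (H : Type*) [Group H] : Subgroup (X → H) where
  carrier := {f | (Function.mulSupport f).Finite}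
  one_mem' := by
    have h : Function.mulSupport (1 : X → H) = ∅ := Function.mulSupport_one
    simp only [Set.mem_setOf_eq, h]
    exact Set.finite_empty
  mul_mem' := by
    intro f g hf hg
    exact Set.Finite.subset (Set.Finite.union hf hg) (Function.mulSupport_mul f g)
  inv_mem' := by
    intro f hf
    show (Function.mulSupport f⁻¹).Finite
    have h : Function.mulSupport f⁻¹ = Function.mulSupport f := by
      ext x
      simp [Function.mem_mulSupport]
    rw [h]
    exact hf

variable (Γ : Type*) [Group Γ] (X : Type*) [MulAction Γ X] (H : Type*) [Group H]

/-- The coordinate-permutation automorphism `(g·f)(x) = f(g⁻¹·x)` of `⊕_{x ∈ X} H`. -/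
def lampShift (γ : Γ) : Lamps X H ≃* Lamps X H where
  toFun f := ⟨fun x => (f : X → H) (γ⁻¹ • x), by
    have hf : (Function.mulSupport (f : X → H)).Finite := f.2
    refine Set.Finite.subset (hf.image fun x => γ • x) ?_
    intro x hx
    exact ⟨γ⁻¹ • x, hx, smul_inv_smul γ x⟩⟩
  invFun f := ⟨fun x => (f : X → H) (γ • x), by
    have hf : (Function.mulSupport (f : X → H)).Finite := f.2
    refine Set.Finite.subset (hf.image fun x => γ⁻¹ • x) ?_
    intro x hx
    exact ⟨γ • x, hx, inv_smul_smul γ x⟩⟩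
  left_inv f := Subtype.ext <| funext fun x => by simp
  right_inv f := Subtype.ext <| funext fun x => by simp
  map_mul' f g := rfl

/-- The permutation action of `Γ` on lamp configurations, as a homomorphism to `MulAut`. -/
def wreathAction : Γ →* MulAut (Lamps X H) where
  toFun γ := lampShift Γ X H γ
  map_one' := by
    refine MulEquiv.ext fun f => Subtype.ext <| funext fun x => ?_
    show (f : X → H) ((1 : Γ)⁻¹ • x) = (f : X → H) x
    simp
  map_mul' γ₁ γ₂ := by
    refine MulEquiv.ext fun f => Subtype.ext <| funext fun x => ?_
    show (f : X → H) ((γ₁ * γ₂)⁻¹ • x) = (f : X → H) (γ₂⁻¹ • γ₁⁻¹ • x)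
    rw [mul_inv_rev, mul_smul]

/-- The permutation wreath product `H ≀_X Γ = (⊕_{x ∈ X} H) ⋊ Γ`. -/
abbrev PWreath := SemidirectProduct (Lamps X H) Γ (wreathAction Γ X H)

/-- The action of the wreath product on the base space (through `Γ`). -/
instance pwreathBaseAction : MulAction (PWreath Γ X H) X where
  smul g x := g.right • x
  one_smul x := by
    show (1 : PWreath Γ X H).right • x = x
    rw [SemidirectProduct.one_right, one_smul]
  mul_smul g₁ g₂ x := by
    show (g₁ * g₂).right • x = g₁.right • g₂.right • x
    rw [SemidirectProduct.mul_right g₁ g₂, mul_smul]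

open Classical in
/-- The lamp configuration equal to `h` at `x₀` and trivial elsewhere. -/
noncomputable def lampAt (X : Type*) (H : Type*) [Group H] (x₀ : X) (h : H) : Lamps X H :=
  ⟨fun x => if x = x₀ then h else 1, by
    refine Set.Finite.subset (Set.finite_singleton x₀) ?_
    intro x hx
    by_contra hne
    simp only [Set.mem_singleton_iff] at hne
    exact hx (if_neg hne)⟩

/-- The two lamp generators `(±1₁^o, e)` of `ℤ ≀_X Γ`. -/
noncomputable def lampGenSet (o : X) : Set (PWreath Γ X (Multiplicative ℤ)) :=
  {SemidirectProduct.inl (lampAt X (Multiplicative ℤ) o (Multiplicative.ofAdd 1)),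
   SemidirectProduct.inl (lampAt X (Multiplicative ℤ) o (Multiplicative.ofAdd (-1)))}

/-- The switch-or-walk measure `𝔮 = (1/2)(η + μ)` on `ℤ ≀_X Γ`, `η` uniform on
`{(±1₁^o, e)}` and `μ` uniform on the generating set `S` of `Γ`. -/
noncomputable def switchOrWalk (o : X) (S : Set Γ) :
    PWreath Γ X (Multiplicative ℤ) → ℝ := fun g =>
  (1 / 2) * unifOn (lampGenSet Γ X o) g +
  (1 / 2) * unifOn ((fun γ : Γ =>
    (SemidirectProduct.inr γ : PWreath Γ X (Multiplicative ℤ))) '' S) g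

/-- The switch-or-walk generating set `{(±1₁^o, e)} ∪ S` of `ℤ ≀_X Γ`. -/
noncomputable def swGenSet (o : X) (S : Set Γ) : Set (PWreath Γ X (Multiplicative ℤ)) :=
  lampGenSet Γ X o ∪
    (fun γ : Γ => (SemidirectProduct.inr γ : PWreath Γ X (Multiplicative ℤ))) '' S

open Classical in
/-- A `(J,B)`-admissible function on the finite subsets of `X`: there is `A ⊆ X` such that
every `Y` in the support of `F` has the form `Y = g·A` with `J ⊆ Y ⊆ B`. -/
def Admissible {Γ : Type*} [Group Γ] {X : Type*} [MulAction Γ X] (J B : Finset X)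
    (F : Finset X → ℝ) : Prop :=
  ∃ A : Finset X, ∀ Y : Finset X, F Y ≠ 0 →
    (∃ g : Γ, Y = A.image fun x => g • x) ∧ J ⊆ Y ∧ Y ⊆ B

/-- The set `Ω(J,B)` of words (in the letters of `S`) all of whose inverted orbits
starting from points of `J` stay in `B`. -/
def OmegaSet {Γ : Type*} [Group Γ] {X : Type*} [MulAction Γ X] (S : Set Γ)
    (J B : Finset X) : Set (List Γ) :=
  {L | (∀ g ∈ L, g ∈ S) ∧ ∀ x ∈ J, invertedOrbit L x ⊆ (B : Set X)}

end Wreath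

section Letters

/-- The four letters `α, α⁻¹, β, β⁻¹`. -/
inductive GLetter : Type
  | A | A' | B | B'

/-- Formal inverse of a letter. -/
def GLetter.inv : GLetter → GLetter
  | .A => .A'
  | .A' => .A
  | .B => .B'
  | .B' => .B

/-- Action of a letter, given the four functions realizing `α, α⁻¹, β, β⁻¹`. -/
def GLetter.apply {V : Type*} (fA fA' fB fB' : V → V) : GLetter → V → V
  | .A => fA
  | .A' => fA'
  | .B => fB
  | .B' => fB'

/-- `wordApply [γ₁, …, γ_p] x = γ₁·(γ₂·( … (γ_p·x)))`. -/
def wordApply {V : Type*} (fA fA' fB fB' : V → V) (L : List GLetter) (x : V) : V :=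
  L.foldr (fun γ y => γ.apply fA fA' fB fB' y) x

end Letters

section NeumannSegal

/-!  Cyclic Neumann–Segal groups.  The group acts (faithfully) on the boundary of the
spherically homogeneous rooted tree with level-`i` alphabet `{0, …, l i - 1}` (`i ≥ 1`);
a boundary point is the sequence of its letters, the letter at (paper) level `i + 1`
being coordinate `i`. -/

/-- Boundary of the rooted tree with level-`i` alphabet of size `l i`, `i ≥ 1`. -/
def NSSpace (l : ℕ → ℕ) : Type := ∀ i : ℕ, ZMod (l (i + 1))

/-- The rooted automorphism `α`: adds `1` to the first letter. -/
noncomputable def nsAlpha (l : ℕ → ℕ) : NSSpace l → NSSpace l :=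
  fun w => Function.update w 0 (w 0 + 1)

/-- Inverse of `α`. -/
noncomputable def nsAlphaInv (l : ℕ → ℕ) : NSSpace l → NSSpace l :=
  fun w => Function.update w 0 (w 0 - 1)

open Classical in
/-- The directed automorphism `β`: along the ray `0^∞`, at the first nonzero letter `x_j`,
if `x_j = l_j/2` then it applies `α` to the remaining suffix (i.e. adds `1` to the next
letter), and otherwise acts trivially. -/
noncomputable def nsBeta (l : ℕ → ℕ) : NSSpace l → NSSpace l := fun w =>
  if h : ∃ j, w j ≠ 0 then
    let j := Nat.find h
    if w j = ((l (j + 1) / 2 : ℕ) : ZMod (l (j + 1))) then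
      Function.update w (j + 1) (w (j + 1) + 1)
    else w
  else w

open Classical in
/-- Inverse of `β`. -/
noncomputable def nsBetaInv (l : ℕ → ℕ) : NSSpace l → NSSpace l := fun w =>
  if h : ∃ j, w j ≠ 0 then
    let j := Nat.find h
    if w j = ((l (j + 1) / 2 : ℕ) : ZMod (l (j + 1))) then
      Function.update w (j + 1) (w (j + 1) - 1)
    else w
  else w

/-- The generators `α^{±1}, β^{±1}` of the cyclic Neumann–Segal group, as permutations of
the boundary. -/
noncomputable def nsGens (l : ℕ → ℕ) : Set (Equiv.Perm (NSSpace l)) :=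
  {π | ⇑π = nsAlpha l ∨ ⇑π = nsBeta l ∨ ⇑π⁻¹ = nsAlpha l ∨ ⇑π⁻¹ = nsBeta l}

/-- The cyclic Neumann–Segal group `Γ = ⟨α, β⟩`. -/
noncomputable def NSGroup (l : ℕ → ℕ) : Subgroup (Equiv.Perm (NSSpace l)) :=
  Subgroup.closure (nsGens l)

/-- The generators, as elements of the Neumann–Segal group. -/
noncomputable def nsGenSub (l : ℕ → ℕ) : Set (NSGroup l) :=
  {γ | (γ : Equiv.Perm (NSSpace l)) ∈ nsGens l}

/-- The ray `o = 0^∞`. -/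
def nsO (l : ℕ → ℕ) : NSSpace l := fun _ => 0

/-- The basepoint `0^∞` of the orbital Schreier graph `𝒮`, as a point of the orbit. -/
noncomputable def nsOrbitPt (l : ℕ → ℕ) : MulAction.orbit (NSGroup l) (nsO l) :=
  ⟨nsO l, MulAction.mem_orbit_self _⟩

/-- The permutation wreath product `ℤ ≀_𝒮 Γ` over the orbital Schreier graph `𝒮` of `0^∞`. -/
noncomputable abbrev NSWreath (l : ℕ → ℕ) :=
  PWreath (NSGroup l) (MulAction.orbit (NSGroup l) (nsO l)) (Multiplicative ℤ)

/-- The switch-or-walk measure on `ℤ ≀_𝒮 Γ`. -/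
noncomputable def nsSW (l : ℕ → ℕ) : NSWreath l → ℝ :=
  switchOrWalk (NSGroup l) (MulAction.orbit (NSGroup l) (nsO l)) (nsOrbitPt l) (nsGenSub l)

/-- Vertices of level `n` of the rooted tree. -/
def NSLevel (l : ℕ → ℕ) (n : ℕ) : Type := ∀ i : Fin n, ZMod (l (i.1 + 1))

/-- Extension of a level-`n` vertex to a boundary point, by zeros. -/
noncomputable def nsPad (l : ℕ → ℕ) {n : ℕ} (w : NSLevel l n) : NSSpace l :=
  fun i => if h : i < n then w ⟨i, h⟩ else 0

/-- Truncation of a boundary point to level `n`. -/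
def nsTrunc (l : ℕ → ℕ) (n : ℕ) (x : NSSpace l) : NSLevel l n := fun i => x i.1

/-- Action of a generator letter on level-`n` vertices. -/
noncomputable def nsLevelApply (l : ℕ → ℕ) (n : ℕ) (γ : GLetter) (w : NSLevel l n) :
    NSLevel l n :=
  nsTrunc l n (GLetter.apply (nsAlpha l) (nsAlphaInv l) (nsBeta l) (nsBetaInv l) γ
    (nsPad l w))

/-- The vertex `u_n = 0^n`. -/
def nsLevelO (l : ℕ → ℕ) (n : ℕ) : NSLevel l n := fun _ => 0

/-- Ball of radius `r` about `u_n = 0^n` in the orbital Schreier graph `𝒮_n` of `u_n`. -/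
noncomputable def nsLevelBall (l : ℕ → ℕ) (n r : ℕ) : Set (NSLevel l n) :=
  {y | ∃ L : List GLetter, L.length ≤ r ∧
    L.foldr (fun γ z => nsLevelApply l n γ z) (nsLevelO l n) = y}

end NeumannSegal

section Bubble

/-!  Bubble groups.  A vertex of the bubble graph is a pair `(w, u)` where `w` is a word
whose letter at position `i` lies in the branching alphabet `{1, …, b i - 1}` (encoded as
`ZMod (b i - 1)`, the letter `z` being encoded as `z - 1`) and `u ∈ ZMod (2 * a k)`
(`k = |w|`) is a position on the bubble (cycle) of length `2 * a k` indexed by `w`. -/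

/-- Vertex set of the bubble graph `X_{a,b}`. -/
def BubbleVert (a b : ℕ → ℕ) : Type :=
  Σ k : ℕ, ((i : Fin k) → ZMod (b i.1 - 1)) × ZMod (2 * a k)

/-- `α` rotates every bubble: it advances the position `u` by one. -/
noncomputable def bubAlpha (a b : ℕ → ℕ) : BubbleVert a b → BubbleVert a b :=
  fun v => ⟨v.1, v.2.1, v.2.2 + 1⟩

/-- Inverse of `α`. -/
noncomputable def bubAlphaInv (a b : ℕ → ℕ) : BubbleVert a b → BubbleVert a b :=
  fun v => ⟨v.1, v.2.1, v.2.2 - 1⟩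

/-- `β` rotates every branching cycle
`(w, a_k) → (w·1, 0) → (w·2, 0) → ⋯ → (w·(b_k - 1), 0) → (w, a_k)`,
and fixes all other vertices (self-loops). -/
noncomputable def bubBeta (a b : ℕ → ℕ) : BubbleVert a b → BubbleVert a b
  | ⟨0, w, u⟩ =>
      if u = ((a 0 : ℕ) : ZMod (2 * a 0)) ∧ u ≠ 0 then ⟨1, Fin.snoc w 0, 0⟩
      else ⟨0, w, u⟩
  | ⟨k + 1, w, u⟩ =>
      if u = ((a (k + 1) : ℕ) : ZMod (2 * a (k + 1))) ∧ u ≠ 0 then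
        ⟨k + 2, Fin.snoc w 0, 0⟩
      else if u = 0 then
        (if w (Fin.last k) = ((b k - 2 : ℕ) : ZMod (b k - 1)) then
          ⟨k, Fin.init w, ((a k : ℕ) : ZMod (2 * a k))⟩
        else
          ⟨k + 1, Function.update w (Fin.last k) (w (Fin.last k) + 1), u⟩)
      else ⟨k + 1, w, u⟩

/-- Inverse of `β`. -/
noncomputable def bubBetaInv (a b : ℕ → ℕ) : BubbleVert a b → BubbleVert a b
  | ⟨0, w, u⟩ =>
      if u = ((a 0 : ℕ) : ZMod (2 * a 0)) ∧ u ≠ 0 then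
        ⟨1, Fin.snoc w ((b 0 - 2 : ℕ) : ZMod (b 0 - 1)), 0⟩
      else ⟨0, w, u⟩
  | ⟨k + 1, w, u⟩ =>
      if u = ((a (k + 1) : ℕ) : ZMod (2 * a (k + 1))) ∧ u ≠ 0 then
        ⟨k + 2, Fin.snoc w ((b (k + 1) - 2 : ℕ) : ZMod (b (k + 1) - 1)), 0⟩
      else if u = 0 then
        (if w (Fin.last k) = 0 then
          ⟨k, Fin.init w, ((a k : ℕ) : ZMod (2 * a k))⟩
        else
          ⟨k + 1, Function.update w (Fin.last k) (w (Fin.last k) - 1), u⟩)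
      else ⟨k + 1, w, u⟩

/-- The generators `α^{±1}, β^{±1}`, as permutations of the bubble graph. -/
noncomputable def bubGens (a b : ℕ → ℕ) : Set (Equiv.Perm (BubbleVert a b)) :=
  {π | ⇑π = bubAlpha a b ∨ ⇑π = bubBeta a b ∨ ⇑π⁻¹ = bubAlpha a b ∨ ⇑π⁻¹ = bubBeta a b}

/-- The bubble group `Γ_{a,b} = ⟨α, β⟩`. -/
noncomputable def BubbleGroup (a b : ℕ → ℕ) : Subgroup (Equiv.Perm (BubbleVert a b)) :=
  Subgroup.closure (bubGens a b)

/-- The generators, as elements of the bubble group. -/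
noncomputable def bubGenSub (a b : ℕ → ℕ) : Set (BubbleGroup a b) :=
  {γ | (γ : Equiv.Perm (BubbleVert a b)) ∈ bubGens a b}

/-- The root `o` of the bubble graph. -/
def bubRoot (a b : ℕ → ℕ) : BubbleVert a b := ⟨0, fun i => i.elim0, 0⟩

/-- The midpoint `𝔪_k = (1^k, ⌊a_k/2⌋)` on the bubble indexed by the word `1^k`. -/
def bubM (a b : ℕ → ℕ) (k : ℕ) : BubbleVert a b :=
  ⟨k, fun _ => 0, ((a k / 2 : ℕ) : ZMod (2 * a k))⟩

/-- Application of a word of letters to a vertex of the bubble graph. -/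
noncomputable def bubApply (a b : ℕ → ℕ) (L : List GLetter) (x : BubbleVert a b) :
    BubbleVert a b :=
  wordApply (bubAlpha a b) (bubAlphaInv a b) (bubBeta a b) (bubBetaInv a b) L x

/-- Ball of radius `r` about `x` in the bubble graph. -/
noncomputable def bubBall (a b : ℕ → ℕ) (x : BubbleVert a b) (r : ℕ) :
    Set (BubbleVert a b) :=
  {y | ∃ L : List GLetter, L.length ≤ r ∧ bubApply a b L x = y}

/-- Inverted orbit of `x` under a word of letters. -/
noncomputable def bubInvOrbit (a b : ℕ → ℕ) (L : List GLetter) (x : BubbleVert a b) :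
    Set (BubbleVert a b) :=
  {y | ∃ j ≤ L.length, bubApply a b (L.take j) x = y}

/-- `α^s` for `s : ℤ`. -/
noncomputable def bubAlphaZPow (a b : ℕ → ℕ) (s : ℤ) (x : BubbleVert a b) :
    BubbleVert a b :=
  if 0 ≤ s then (bubAlpha a b)^[s.toNat] x else (bubAlphaInv a b)^[(-s).toNat] x

/-- Number of vertices in the first `j` levels of the bubble graph (words of length `< j`). -/
def bubLevelCard (a b : ℕ → ℕ) (j : ℕ) : ℕ :=
  ∑ m ∈ Finset.range j, (∏ i ∈ Finset.range m, (b i - 1)) * (2 * a m)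

end Bubble

/-! ### auxiliary development -/

/-- shift of the size sequence -/
def lsh (l : ℕ → ℕ) : ℕ → ℕ := fun k => l (k + 1)

/-- suffix of a boundary point -/
def suff (l : ℕ → ℕ) (x : NSSpace l) : NSSpace (lsh l) := fun k => x (k + 1)

/-- the half element -/
noncomputable def Hf (l : ℕ → ℕ) : ZMod (l 1) := ((l 1 / 2 : ℕ) : ZMod (l 1))

section basic
variable {l : ℕ → ℕ} {x : NSSpace l}
open Classical

lemma nsAlpha_zero : nsAlpha l x 0 = x 0 + 1 := by
  exact Function.update_self _ _ _

lemma nsAlpha_succ (k : ℕ) : nsAlpha l x (k + 1) = x (k + 1) := by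
  exact Function.update_of_ne (Nat.succ_ne_zero k) _ _

lemma suff_nsAlpha : suff l (nsAlpha l x) = suff l x := by
  funext k; exact nsAlpha_succ k

lemma nsAlphaInv_zero : nsAlphaInv l x 0 = x 0 - 1 := by
  exact Function.update_self _ _ _

lemma nsAlphaInv_succ (k : ℕ) : nsAlphaInv l x (k + 1) = x (k + 1) := by
  exact Function.update_of_ne (Nat.succ_ne_zero k) _ _

lemma suff_update (j : ℕ) (v : ZMod (l (j + 2))) :
    suff l (Function.update x (j + 1) v) = Function.update (suff l x) j v := by
  funext k
  by_cases h : k = j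
  · subst h; exact (Function.update_self (f := x) _ _).trans (Function.update_self (f := suff l x) _ _).symm
  · exact (Function.update_of_ne (f := x) (by omega) _).trans
      (Function.update_of_ne (f := suff l x) h _).symm

lemma nsBeta_spec (hE : ∃ j, x j ≠ 0) :
    nsBeta l x = if x (Nat.find hE) =
        ((l (Nat.find hE + 1) / 2 : ℕ) : ZMod (l (Nat.find hE + 1))) then
      Function.update x (Nat.find hE + 1) (x (Nat.find hE + 1) + 1)
    else x := by
  unfold nsBeta
  rw [dif_pos hE]
  rfl

lemma nsBeta_of_ne (hx : x 0 ≠ 0) :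
    nsBeta l x = if x 0 = Hf l then Function.update x 1 (x 1 + 1) else x := by
  have hE : ∃ j, x j ≠ 0 := ⟨0, hx⟩
  have hf : Nat.find hE = 0 := by
    simp [Nat.find_eq_zero hE, hx]
  rw [nsBeta_spec hE, hf]
  rfl

lemma nsBetaInv_spec (hE : ∃ j, x j ≠ 0) :
    nsBetaInv l x = if x (Nat.find hE) =
        ((l (Nat.find hE + 1) / 2 : ℕ) : ZMod (l (Nat.find hE + 1))) then
      Function.update x (Nat.find hE + 1) (x (Nat.find hE + 1) - 1)
    else x := by
  unfold nsBetaInv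
  rw [dif_pos hE]
  rfl

lemma nsBetaInv_of_ne (hx : x 0 ≠ 0) :
    nsBetaInv l x = if x 0 = Hf l then Function.update x 1 (x 1 - 1) else x := by
  have hE : ∃ j, x j ≠ 0 := ⟨0, hx⟩
  have hf : Nat.find hE = 0 := by
    simp [Nat.find_eq_zero hE, hx]
  rw [nsBetaInv_spec hE, hf]
  rfl

lemma nsBeta_zero_apply : nsBeta l x 0 = x 0 := by
  by_cases hE : ∃ j, x j ≠ 0
  · rw [nsBeta_spec hE]
    by_cases hc : x (Nat.find hE) = ((l (Nat.find hE + 1) / 2 : ℕ) : ZMod (l (Nat.find hE + 1)))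
    · exact (congrFun (if_pos hc) 0).trans (Function.update_of_ne (f := x) (Nat.succ_ne_zero _).symm _)
    · exact congrFun (if_neg hc) 0
  · unfold nsBeta; rw [dif_neg hE]

lemma nsBetaInv_zero_apply : nsBetaInv l x 0 = x 0 := by
  by_cases hE : ∃ j, x j ≠ 0
  · rw [nsBetaInv_spec hE]
    by_cases hc : x (Nat.find hE) = ((l (Nat.find hE + 1) / 2 : ℕ) : ZMod (l (Nat.find hE + 1)))
    · exact (congrFun (if_pos hc) 0).trans (Function.update_of_ne (f := x) (Nat.succ_ne_zero _).symm _)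
    · exact congrFun (if_neg hc) 0
  · unfold nsBetaInv; rw [dif_neg hE]

lemma find_succ (hx : x 0 = 0) (hE : ∃ j, x j ≠ 0) (hE' : ∃ j, suff l x j ≠ 0) :
    Nat.find hE = Nat.find hE' + 1 := by
  have h1 : x (Nat.find hE' + 1) ≠ 0 := Nat.find_spec hE'
  rw [Nat.find_eq_iff]
  refine ⟨h1, ?_⟩
  intro m hm
  rcases m with _ | m
  · simpa using hx
  · have := Nat.find_min hE' (m := m) (by omega)
    exact this

lemma suff_nsBeta (hx : x 0 = 0) :
    suff l (nsBeta l x) = nsBeta (lsh l) (suff l x) := by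
  by_cases hE : ∃ j, x j ≠ 0
  · have hE' : ∃ j, suff l x j ≠ 0 := by
      obtain ⟨j, hj⟩ := hE
      rcases j with _ | j
      · exact absurd hx hj
      · exact ⟨j, hj⟩
    have hfind := find_succ hx hE hE'
    rw [nsBeta_spec hE, nsBeta_spec (x := suff l x) hE', hfind]
    have hcond : (x (Nat.find hE' + 1) =
        ((l (Nat.find hE' + 1 + 1) / 2 : ℕ) : ZMod (l (Nat.find hE' + 1 + 1)))) ↔
        (suff l x (Nat.find hE') =
        ((lsh l (Nat.find hE' + 1) / 2 : ℕ) : ZMod (lsh l (Nat.find hE' + 1)))) := Iff.rfl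
    by_cases hc : suff l x (Nat.find hE') =
        ((lsh l (Nat.find hE' + 1) / 2 : ℕ) : ZMod (lsh l (Nat.find hE' + 1)))
    · exact (congrArg (suff l) (if_pos (hcond.2 hc))).trans
        ((suff_update (l := l) (Nat.find hE' + 1) _).trans (if_pos hc).symm)
    · exact (congrArg (suff l) (if_neg (fun h => hc (hcond.1 h)))).trans (if_neg hc).symm
  · have hE' : ¬ ∃ j, suff l x j ≠ 0 := by
      intro ⟨j, hj⟩
      exact hE ⟨j + 1, hj⟩
    unfold nsBeta
    rw [dif_neg hE, dif_neg hE']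

lemma suff_nsBetaInv (hx : x 0 = 0) :
    suff l (nsBetaInv l x) = nsBetaInv (lsh l) (suff l x) := by
  by_cases hE : ∃ j, x j ≠ 0
  · have hE' : ∃ j, suff l x j ≠ 0 := by
      obtain ⟨j, hj⟩ := hE
      rcases j with _ | j
      · exact absurd hx hj
      · exact ⟨j, hj⟩
    have hfind := find_succ hx hE hE'
    rw [nsBetaInv_spec hE, nsBetaInv_spec (x := suff l x) hE', hfind]
    have hcond : (x (Nat.find hE' + 1) =
        ((l (Nat.find hE' + 1 + 1) / 2 : ℕ) : ZMod (l (Nat.find hE' + 1 + 1)))) ↔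
        (suff l x (Nat.find hE') =
        ((lsh l (Nat.find hE' + 1) / 2 : ℕ) : ZMod (lsh l (Nat.find hE' + 1)))) := Iff.rfl
    by_cases hc : suff l x (Nat.find hE') =
        ((lsh l (Nat.find hE' + 1) / 2 : ℕ) : ZMod (lsh l (Nat.find hE' + 1)))
    · exact (congrArg (suff l) (if_pos (hcond.2 hc))).trans
        ((suff_update (l := l) (Nat.find hE' + 1) _).trans (if_pos hc).symm)
    · exact (congrArg (suff l) (if_neg (fun h => hc (hcond.1 h)))).trans (if_neg hc).symm
  · have hE' : ¬ ∃ j, suff l x j ≠ 0 := by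
      intro ⟨j, hj⟩
      exact hE ⟨j + 1, hj⟩
    unfold nsBetaInv
    rw [dif_neg hE, dif_neg hE']

end basic

section perm
variable {l : ℕ → ℕ} {x : NSSpace l}

lemma nsBeta_fix (hx : x 0 ≠ 0) (hH : x 0 ≠ Hf l) : nsBeta l x = x := by
  exact (nsBeta_of_ne hx).trans (if_neg hH)

lemma nsBeta_half (hx : x 0 ≠ 0) (hH : x 0 = Hf l) :
    nsBeta l x = Function.update x 1 (x 1 + 1) := by
  exact (nsBeta_of_ne hx).trans (if_pos hH)

lemma nsBetaInv_fix (hx : x 0 ≠ 0) (hH : x 0 ≠ Hf l) : nsBetaInv l x = x := by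
  exact (nsBetaInv_of_ne hx).trans (if_neg hH)

lemma nsBetaInv_half (hx : x 0 ≠ 0) (hH : x 0 = Hf l) :
    nsBetaInv l x = Function.update x 1 (x 1 - 1) := by
  exact (nsBetaInv_of_ne hx).trans (if_pos hH)

lemma nsBetaInv_nsBeta (k : ℕ) :
    ∀ (l : ℕ → ℕ) (x : NSSpace l), nsBetaInv l (nsBeta l x) k = x k := by
  induction k with
  | zero =>
    intro l x
    rw [nsBetaInv_zero_apply, nsBeta_zero_apply]
  | succ k ih =>
    intro l x
    by_cases hx : x 0 = 0
    · have h1 : nsBeta l x 0 = 0 := by rw [nsBeta_zero_apply]; exact hx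
      have h2 : nsBetaInv l (nsBeta l x) (k + 1) =
          suff l (nsBetaInv l (nsBeta l x)) k := rfl
      rw [h2, suff_nsBetaInv h1, suff_nsBeta hx, ih]
      rfl
    · by_cases hH : x 0 = Hf l
      · rw [nsBeta_half hx hH]
        set y := Function.update x 1 (x 1 + 1) with hy
        have hy0 : y 0 = x 0 := Function.update_of_ne (by omega) _ _
        rw [nsBetaInv_half (x := y) (by rw [hy0]; exact hx) (by rw [hy0]; exact hH)]
        by_cases hk : k = 0
        · subst hk
          rw [show (0:ℕ) + 1 = 1 from rfl, Function.update_self]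
          have : y 1 = x 1 + 1 := Function.update_self _ _ _
          rw [this]
          exact add_sub_cancel_right _ _
        · rw [Function.update_of_ne (by omega), hy]
          exact Function.update_of_ne (f := x) (by omega) _
      · rw [nsBeta_fix hx hH, nsBetaInv_fix hx hH]

lemma nsBeta_nsBetaInv (k : ℕ) :
    ∀ (l : ℕ → ℕ) (x : NSSpace l), nsBeta l (nsBetaInv l x) k = x k := by
  induction k with
  | zero =>
    intro l x
    rw [nsBeta_zero_apply, nsBetaInv_zero_apply]
  | succ k ih =>
    intro l x
    by_cases hx : x 0 = 0
    · have h1 : nsBetaInv l x 0 = 0 := by rw [nsBetaInv_zero_apply]; exact hx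
      have h2 : nsBeta l (nsBetaInv l x) (k + 1) =
          suff l (nsBeta l (nsBetaInv l x)) k := rfl
      rw [h2, suff_nsBeta h1, suff_nsBetaInv hx, ih]
      rfl
    · by_cases hH : x 0 = Hf l
      · rw [nsBetaInv_half hx hH]
        set y := Function.update x 1 (x 1 - 1) with hy
        have hy0 : y 0 = x 0 := Function.update_of_ne (by omega) _ _
        rw [nsBeta_half (x := y) (by rw [hy0]; exact hx) (by rw [hy0]; exact hH)]
        by_cases hk : k = 0
        · subst hk
          rw [show (0:ℕ) + 1 = 1 from rfl, Function.update_self]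
          have : y 1 = x 1 - 1 := Function.update_self _ _ _
          rw [this]
          exact sub_add_cancel _ _
        · rw [Function.update_of_ne (by omega), hy]
          exact Function.update_of_ne (f := x) (by omega) _
      · rw [nsBetaInv_fix hx hH, nsBeta_fix hx hH]

noncomputable def alphaPerm (l : ℕ → ℕ) : Equiv.Perm (NSSpace l) where
  toFun := nsAlpha l
  invFun := nsAlphaInv l
  left_inv x := by
    funext k
    rcases k with _ | k
    · rw [nsAlphaInv_zero, nsAlpha_zero]
      exact add_sub_cancel_right _ _
    · rw [nsAlphaInv_succ, nsAlpha_succ]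
  right_inv x := by
    funext k
    rcases k with _ | k
    · rw [nsAlpha_zero, nsAlphaInv_zero]
      exact sub_add_cancel _ _
    · rw [nsAlpha_succ, nsAlphaInv_succ]

noncomputable def betaPerm (l : ℕ → ℕ) : Equiv.Perm (NSSpace l) where
  toFun := nsBeta l
  invFun := nsBetaInv l
  left_inv x := funext fun k => nsBetaInv_nsBeta k l x
  right_inv x := funext fun k => nsBeta_nsBetaInv k l x

end perm

section act
variable {l : ℕ → ℕ}

/-- one "letter" `(a,b)`: apply `α^a` then `β^b`. -/
noncomputable def nstep (l : ℕ → ℕ) (p : ℕ × ℕ) (x : NSSpace l) : NSSpace l :=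
  (nsBeta l)^[p.2] ((nsAlpha l)^[p.1] x)

noncomputable def Act (l : ℕ → ℕ) (L : List (ℕ × ℕ)) (x : NSSpace l) : NSSpace l :=
  L.foldl (fun y p => nstep l p y) x

/-- induced letter one level down, given the phase `c` before the letter. -/
noncomputable def ind1 (l : ℕ → ℕ) (p : ℕ × ℕ) (c : ZMod (l 1)) : ℕ × ℕ :=
  if c + (p.1 : ZMod (l 1)) = 0 then (0, p.2)
  else if c + (p.1 : ZMod (l 1)) = Hf l then (p.2, 0)
  else (0, 0)

/-- induced word one level down. -/
noncomputable def indW (l : ℕ → ℕ) : List (ℕ × ℕ) → ZMod (l 1) → List (ℕ × ℕ)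
  | [], _ => []
  | p :: t, c => ind1 l p c :: indW l t (c + (p.1 : ZMod (l 1)))

lemma alpha_iter_zero (a : ℕ) (x : NSSpace l) :
    ((nsAlpha l)^[a] x) 0 = x 0 + (a : ZMod (l 1)) := by
  induction a generalizing x with
  | zero => simp
  | succ a ih =>
    rw [Function.iterate_succ_apply, ih, nsAlpha_zero]
    push_cast
    ring

lemma suff_alpha_iter (a : ℕ) (x : NSSpace l) :
    suff l ((nsAlpha l)^[a] x) = suff l x := by
  induction a generalizing x with
  | zero => rfl
  | succ a ih => rw [Function.iterate_succ_apply, ih, suff_nsAlpha]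

lemma beta_iter_zero (b : ℕ) (x : NSSpace l) :
    ((nsBeta l)^[b] x) 0 = x 0 := by
  induction b generalizing x with
  | zero => rfl
  | succ b ih => rw [Function.iterate_succ_apply, ih, nsBeta_zero_apply]

lemma suff_beta_iter_zero (b : ℕ) (x : NSSpace l) (hx : x 0 = 0) :
    suff l ((nsBeta l)^[b] x) = (nsBeta (lsh l))^[b] (suff l x) := by
  induction b generalizing x with
  | zero => rfl
  | succ b ih =>
    rw [Function.iterate_succ_apply, Function.iterate_succ_apply,
      ih _ (by rw [nsBeta_zero_apply]; exact hx), suff_nsBeta hx]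

lemma suff_beta_iter_half (b : ℕ) (x : NSSpace l) (hx : x 0 ≠ 0) (hH : x 0 = Hf l) :
    suff l ((nsBeta l)^[b] x) = (nsAlpha (lsh l))^[b] (suff l x) := by
  induction b generalizing x with
  | zero => rfl
  | succ b ih =>
    have h0 : nsBeta l x 0 = x 0 := nsBeta_zero_apply
    rw [Function.iterate_succ_apply, Function.iterate_succ_apply,
      ih _ (by rw [h0]; exact hx) (by rw [h0]; exact hH), nsBeta_half hx hH]
    congr 1
    funext k
    show Function.update x 1 (x 1 + 1) (k + 1) = nsAlpha (lsh l) (suff l x) k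
    rcases k with _ | k
    · rw [nsAlpha_zero]
      exact Function.update_self _ _ _
    · rw [nsAlpha_succ]
      exact Function.update_of_ne (f := x) (by omega) _

lemma beta_iter_fix (b : ℕ) (x : NSSpace l) (hx : x 0 ≠ 0) (hH : x 0 ≠ Hf l) :
    (nsBeta l)^[b] x = x := by
  induction b with
  | zero => rfl
  | succ b ih => rw [Function.iterate_succ_apply', ih, nsBeta_fix hx hH]

lemma nstep_zero (p : ℕ × ℕ) (x : NSSpace l) :
    nstep l p x 0 = x 0 + (p.1 : ZMod (l 1)) := by
  unfold nstep
  rw [beta_iter_zero, alpha_iter_zero]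

lemma suff_nstep (p : ℕ × ℕ) (x : NSSpace l) :
    suff l (nstep l p x) = nstep (lsh l) (ind1 l p (x 0)) (suff l x) := by
  unfold nstep ind1
  have h0 : ((nsAlpha l)^[p.1] x) 0 = x 0 + (p.1 : ZMod (l 1)) := alpha_iter_zero _ _
  by_cases hz : x 0 + (p.1 : ZMod (l 1)) = 0
  · rw [if_pos hz, suff_beta_iter_zero _ _ (by rw [h0]; exact hz), suff_alpha_iter]
    rfl
  · by_cases hH : x 0 + (p.1 : ZMod (l 1)) = Hf l
    · rw [if_neg hz, if_pos hH,
        suff_beta_iter_half _ _ (by rw [h0]; exact hz) (by rw [h0]; exact hH),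
        suff_alpha_iter]
      rfl
    · rw [if_neg hz, if_neg hH,
        beta_iter_fix _ _ (by rw [h0]; exact hz) (by rw [h0]; exact hH),
        suff_alpha_iter]
      rfl

lemma Act_nil (x : NSSpace l) : Act l [] x = x := rfl

lemma Act_cons (p : ℕ × ℕ) (t : List (ℕ × ℕ)) (x : NSSpace l) :
    Act l (p :: t) x = Act l t (nstep l p x) := rfl

lemma Act_append (L₁ L₂ : List (ℕ × ℕ)) (x : NSSpace l) :
    Act l (L₁ ++ L₂) x = Act l L₂ (Act l L₁ x) := List.foldl_append ..

lemma Act_zero (L : List (ℕ × ℕ)) (x : NSSpace l) :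
    Act l L x 0 = x 0 + (((L.map Prod.fst).sum : ℕ) : ZMod (l 1)) := by
  induction L generalizing x with
  | nil => simp [Act_nil]
  | cons p t ih =>
    rw [Act_cons, ih, nstep_zero, List.map_cons, List.sum_cons, Nat.cast_add, add_assoc]

lemma suff_Act (L : List (ℕ × ℕ)) (x : NSSpace l) :
    suff l (Act l L x) = Act (lsh l) (indW l L (x 0)) (suff l x) := by
  induction L generalizing x with
  | nil => rfl
  | cons p t ih =>
    rw [Act_cons, ih, indW, Act_cons, suff_nstep, nstep_zero]

lemma indW_append (L₁ L₂ : List (ℕ × ℕ)) (c : ZMod (l 1)) :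
    indW l (L₁ ++ L₂) c =
      indW l L₁ c ++ indW l L₂ (c + (((L₁.map Prod.fst).sum : ℕ) : ZMod (l 1))) := by
  induction L₁ generalizing c with
  | nil => simp [indW]
  | cons p t ih =>
    rw [List.cons_append, indW, indW, ih]
    congr 2
    rw [List.map_cons, List.sum_cons, Nat.cast_add, add_assoc]

end act

section scheme
variable {l : ℕ → ℕ}

lemma cast_eq_iff {n a b : ℕ} (hb : b < n) (ha : a < 2 * n) :
    ((a : ZMod n) = (b : ZMod n)) ↔ (a = b ∨ a = n + b) := by
  rw [ZMod.natCast_eq_natCast_iff']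
  rcases lt_or_ge a n with h | h
  · rw [Nat.mod_eq_of_lt h, Nat.mod_eq_of_lt hb]
    omega
  · rw [Nat.mod_eq_sub_mod h, Nat.mod_eq_of_lt (by omega), Nat.mod_eq_of_lt hb]
    omega

lemma nstep_comp (a b : ℕ) (y : NSSpace l) :
    nstep l (0, b) (nstep l (a, 0) y) = nstep l (a, b) y := by
  simp [nstep]

lemma nstep_id (y : NSSpace l) : nstep l (0, 0) y = y := rfl

lemma fst_sum_block (k : ℕ) (b : ℕ → ℕ) :
    ((((List.range k).map (fun p => ((1 : ℕ), b p))).map Prod.fst).sum) = k := by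
  induction k with
  | zero => simp
  | succ k ih =>
    rw [List.range_succ, List.map_append, List.map_append, List.sum_append, ih]
    simp

lemma block_eval_aux (hn : l 1 = 2 * (l 1 / 2)) (hh : 0 < l 1 / 2) (c B : ℕ)
    (hc : c < l 1 / 2) (b : ℕ → ℕ)
    (hb1 : b (l 1 / 2 - 1 - c) = 1) (hb2 : b (l 1 - 1 - c) = B) (y : NSSpace (lsh l)) :
    ∀ k, k ≤ l 1 →
      Act (lsh l) (indW l ((List.range k).map (fun p => ((1 : ℕ), b p)))
          ((c : ZMod (l 1)))) y =
        if k ≤ l 1 / 2 - 1 - c then y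
        else if k ≤ l 1 - 1 - c then nstep (lsh l) (1, 0) y
        else nstep (lsh l) (1, B) y := by
  intro k
  induction k with
  | zero =>
    intro _
    rw [if_pos (by omega)]
    rfl
  | succ k ih =>
    intro hk
    rw [List.range_succ, List.map_append, indW_append, Act_append, ih (by omega)]
    have hsum : ((((List.range k).map (fun p => ((1 : ℕ), b p))).map Prod.fst).sum) = k :=
      fst_sum_block k b
    rw [hsum]
    show Act (lsh l) (ind1 l (1, b k) ((c : ZMod (l 1)) + (k : ZMod (l 1)))
        :: indW l [] _) _ = _
    have hphase : (c : ZMod (l 1)) + (k : ZMod (l 1)) + ((1:ℕ) : ZMod (l 1))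
        = ((c + k + 1 : ℕ) : ZMod (l 1)) := by push_cast; ring
    have hzero_iff : ((c + k + 1 : ℕ) : ZMod (l 1)) = 0 ↔ c + k + 1 = l 1 := by
      rw [show (0 : ZMod (l 1)) = ((0 : ℕ) : ZMod (l 1)) by simp,
        cast_eq_iff (by omega) (by omega)]
      omega
    have hH_iff : ((c + k + 1 : ℕ) : ZMod (l 1)) = Hf l ↔ c + k + 1 = l 1 / 2 := by
      unfold Hf
      rw [cast_eq_iff (by omega) (by omega)]
      omega
    unfold ind1
    rw [hphase]
    rcases Nat.lt_trichotomy k (l 1 / 2 - 1 - c) with h1 | h1 | h1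
    · rw [if_neg (by rw [hzero_iff]; omega), if_neg (by rw [hH_iff]; omega),
        if_pos (by omega : k ≤ l 1 / 2 - 1 - c), if_pos (by omega : k + 1 ≤ l 1 / 2 - 1 - c)]
      show Act (lsh l) [] (nstep (lsh l) (0,0) y) = y
      rw [nstep_id]; rfl
    · -- k = h - 1 - c : the alpha slot
      rw [if_neg (by rw [hzero_iff]; omega), if_pos (by rw [hH_iff]; omega),
        if_pos (by omega : k ≤ l 1 / 2 - 1 - c),
        if_neg (by omega : ¬ k + 1 ≤ l 1 / 2 - 1 - c),
        if_pos (by omega : k + 1 ≤ l 1 - 1 - c)]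
      show Act (lsh l) [] (nstep (lsh l) (b k, 0) y) = nstep (lsh l) (1, 0) y
      rw [← h1] at hb1
      rw [show b k = 1 from by omega]
      rfl
    · rcases Nat.lt_trichotomy k (l 1 - 1 - c) with h2 | h2 | h2
      · rw [if_neg (by rw [hzero_iff]; omega), if_neg (by rw [hH_iff]; omega),
          if_neg (by omega : ¬ k ≤ l 1 / 2 - 1 - c),
          if_pos (by omega : k ≤ l 1 - 1 - c),
          if_neg (by omega : ¬ k + 1 ≤ l 1 / 2 - 1 - c),
          if_pos (by omega : k + 1 ≤ l 1 - 1 - c)]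
        show Act (lsh l) [] (nstep (lsh l) (0,0) (nstep (lsh l) (1, 0) y)) = _
        rw [nstep_id]; rfl
      · -- k = n - 1 - c : the beta slot
        rw [if_pos (by rw [hzero_iff]; omega),
          if_neg (by omega : ¬ k ≤ l 1 / 2 - 1 - c),
          if_pos (by omega : k ≤ l 1 - 1 - c),
          if_neg (by omega : ¬ k + 1 ≤ l 1 / 2 - 1 - c),
          if_neg (by omega : ¬ k + 1 ≤ l 1 - 1 - c)]
        show Act (lsh l) [] (nstep (lsh l) (0, b k) (nstep (lsh l) (1, 0) y)) = _
        have hbk : b k = B := by rw [h2]; exact hb2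
        rw [hbk, nstep_comp]
        rfl
      · rw [if_neg (by rw [hzero_iff]; omega), if_neg (by rw [hH_iff]; omega),
          if_neg (by omega : ¬ k ≤ l 1 / 2 - 1 - c),
          if_neg (by omega : ¬ k ≤ l 1 - 1 - c),
          if_neg (by omega : ¬ k + 1 ≤ l 1 / 2 - 1 - c),
          if_neg (by omega : ¬ k + 1 ≤ l 1 - 1 - c)]
        show Act (lsh l) [] (nstep (lsh l) (0,0) (nstep (lsh l) (1, B) y)) = _
        rw [nstep_id]; rfl

end scheme

section scheme2
variable {l : ℕ → ℕ}

def slen : (ℕ → ℕ) → ℕ → ℕ → ℕ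
  | _, 0, m => m
  | l, d + 1, m => l 1 * slen (lsh l) d m

def bval : (ℕ → ℕ) → ℕ → (List ℕ → ℕ) → ℕ → ℕ
  | _, 0, f, q => f [q + 1]
  | l, d + 1, f, Q =>
    if Q % l 1 + 1 ≤ l 1 / 2 then 1
    else bval (lsh l) d (fun ad => f ((l 1 - (Q % l 1 + 1)) % l 1 :: ad)) (Q / l 1)

def scheme (l : ℕ → ℕ) (d m : ℕ) (f : List ℕ → ℕ) : List (ℕ × ℕ) :=
  (List.range (slen l d m)).map (fun Q => (1, bval l d f Q))

lemma class_reduce_aux (hn : l 1 = 2 * (l 1 / 2)) (hh : 0 < l 1 / 2)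
    (d : ℕ) (f : List ℕ → ℕ) (c : ℕ) (hc : c < l 1 / 2) :
    ∀ (K : ℕ) (y : NSSpace (lsh l)),
      Act (lsh l) (indW l ((List.range (l 1 * K)).map
          (fun Q => ((1 : ℕ), bval l (d + 1) f Q))) ((c : ZMod (l 1)))) y =
        Act (lsh l) ((List.range K).map
          (fun q => ((1 : ℕ), bval (lsh l) d (fun ad => f (c :: ad)) q))) y := by
  intro K
  induction K with
  | zero => intro y; rfl
  | succ K ih =>
    intro y
    rw [Nat.mul_succ, List.range_add, List.map_append, indW_append, Act_append,
      fst_sum_block, List.range_succ, List.map_append, Act_append, ih]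
    have hcast : ((l 1 * K : ℕ) : ZMod (l 1)) = 0 := by
      rw [Nat.cast_mul, ZMod.natCast_self, zero_mul]
    rw [hcast, add_zero]
    rw [List.map_map]
    have hblock := block_eval_aux hn hh c (bval (lsh l) d (fun ad => f (c :: ad)) K) hc
      (fun p => bval l (d + 1) f (l 1 * K + p)) ?_ ?_
      (Act (lsh l) ((List.range K).map
        (fun q => ((1 : ℕ), bval (lsh l) d (fun ad => f (c :: ad)) q))) y) (l 1) le_rfl
    · rw [show ((fun x => ((1:ℕ), bval l (d+1) f x)) ∘ fun x => l 1 * K + x)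
          = fun p => ((1:ℕ), bval l (d + 1) f (l 1 * K + p)) from rfl]
      rw [hblock, if_neg (by omega), if_neg (by omega)]
      rfl
    · -- alpha slot value is 1
      show bval l (d + 1) f (l 1 * K + (l 1 / 2 - 1 - c)) = 1
      rw [bval]
      rw [Nat.mul_add_mod]
      rw [Nat.mod_eq_of_lt (by omega)]
      rw [if_pos (by omega)]
    · -- beta slot value
      show bval l (d + 1) f (l 1 * K + (l 1 - 1 - c)) =
        bval (lsh l) d (fun ad => f (c :: ad)) K
      rw [bval]
      rw [Nat.mul_add_mod]
      rw [Nat.mod_eq_of_lt (by omega)]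
      rw [if_neg (by omega)]
      have h1 : l 1 - (l 1 - 1 - c + 1) = c := by omega
      rw [h1, Nat.mod_eq_of_lt (by omega)]
      have h2 : (l 1 * K + (l 1 - 1 - c)) / l 1 = K := by
        rw [Nat.mul_add_div (by omega)]
        rw [Nat.div_eq_of_lt (by omega), add_zero]
      rw [h2]

lemma class_reduce (hn : l 1 = 2 * (l 1 / 2)) (hh : 0 < l 1 / 2)
    (d m : ℕ) (f : List ℕ → ℕ) (c : ℕ) (hc : c < l 1 / 2) (y : NSSpace (lsh l)) :
    Act (lsh l) (indW l (scheme l (d + 1) m f) ((c : ZMod (l 1)))) y =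
      Act (lsh l) (scheme (lsh l) d m (fun ad => f (c :: ad))) y := by
  unfold scheme
  rw [show slen l (d + 1) m = l 1 * slen (lsh l) d m from rfl]
  exact class_reduce_aux hn hh d f c hc (slen (lsh l) d m) y

lemma base_sum (hn : l 1 = 2 * (l 1 / 2)) (hh : 0 < l 1 / 2)
    (f : List ℕ → ℕ) (M q c : ℕ) (hq1 : 1 ≤ q) (hqM : q ≤ M) (hM : M ≤ l 1 / 2 - 1)
    (hcq : c = l 1 / 2 - q) :
    ∀ k, k ≤ M →
      (((indW l ((List.range k).map (fun Q => ((1 : ℕ), f [Q + 1])))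
          ((c : ZMod (l 1)))).map Prod.fst).sum) = if q ≤ k then f [q] else 0 := by
  intro k
  induction k with
  | zero =>
    intro _
    rw [if_neg (by omega)]
    rfl
  | succ k ih =>
    intro hk
    rw [List.range_succ, List.map_append, indW_append, List.map_append, List.sum_append,
      ih (by omega), fst_sum_block]
    show _ + ((ind1 l (1, f [k + 1]) ((c : ZMod (l 1)) + (k : ZMod (l 1)))).fst + 0) = _
    have hphase : (c : ZMod (l 1)) + (k : ZMod (l 1)) + ((1 : ℕ) : ZMod (l 1))
        = ((c + k + 1 : ℕ) : ZMod (l 1)) := by push_cast; ring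
    have hzero_iff : ((c + k + 1 : ℕ) : ZMod (l 1)) = 0 ↔ c + k + 1 = l 1 := by
      rw [show (0 : ZMod (l 1)) = ((0 : ℕ) : ZMod (l 1)) by simp,
        cast_eq_iff (by omega) (by omega)]
      omega
    have hH_iff : ((c + k + 1 : ℕ) : ZMod (l 1)) = Hf l ↔ c + k + 1 = l 1 / 2 := by
      unfold Hf
      rw [cast_eq_iff (by omega) (by omega)]
      omega
    unfold ind1
    rw [hphase]
    by_cases hkq : k + 1 = q
    · rw [if_neg (show ¬ ((c + k + 1 : ℕ) : ZMod (l 1)) = 0 from by rw [hzero_iff]; omega),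
        if_pos (show ((c + k + 1 : ℕ) : ZMod (l 1)) = Hf l from by rw [hH_iff]; omega),
        if_neg (show ¬ q ≤ k from by omega), if_pos (show q ≤ k + 1 from by omega)]
      simp [hkq]
    · rw [if_neg (show ¬ ((c + k + 1 : ℕ) : ZMod (l 1)) = 0 from by rw [hzero_iff]; omega),
        if_neg (show ¬ ((c + k + 1 : ℕ) : ZMod (l 1)) = Hf l from by rw [hH_iff]; omega)]
      by_cases hq : q ≤ k
      · rw [if_pos hq, if_pos (show q ≤ k + 1 from by omega)]
        simp
      · rw [if_neg hq, if_neg (show ¬ q ≤ k + 1 from by omega)]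
        simp

end scheme2

section mainlemma

lemma main_readout (d : ℕ) :
    ∀ (l : ℕ → ℕ), (∀ k, 1 ≤ k → 0 < l k / 2 ∧ l k = 2 * (l k / 2)) →
    ∀ (m : ℕ) (f : List ℕ → ℕ) (c : ℕ → ℕ) (q : ℕ) (x : NSSpace l),
      (∀ k, k < d → c k < l (k + 1) / 2) →
      1 ≤ q → q ≤ m → m ≤ l (d + 1) / 2 - 1 →
      c d = l (d + 1) / 2 - q →
      (∀ k, k ≤ d → x k = ((c k : ℕ) : ZMod (l (k + 1)))) →
      Act l (scheme l d m f) x (d + 1) =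
        x (d + 1) + ((f ((List.range d).map c ++ [q]) : ℕ) : ZMod (l (d + 2))) := by
  induction d with
  | zero =>
    intro l hL m f c q x hcgood hq1 hqm hm hcd hx
    obtain ⟨hh, hn⟩ := hL 1 le_rfl
    have h1 : Act l (scheme l 0 m f) x 1 = suff l (Act l (scheme l 0 m f) x) 0 := rfl
    rw [h1, suff_Act, Act_zero, hx 0 le_rfl]
    unfold scheme
    rw [show slen l 0 m = m from rfl,
      show (fun Q => ((1 : ℕ), bval l 0 f Q)) = (fun Q => ((1 : ℕ), f [Q + 1])) from rfl,
      base_sum hn hh f m q (c 0) hq1 hqm hm hcd m le_rfl, if_pos hqm]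
    simp [suff]
    rfl
  | succ d ihd =>
    intro l hL m f c q x hcgood hq1 hqm hm hcd hx
    obtain ⟨hh, hn⟩ := hL 1 le_rfl
    have h1 : Act l (scheme l (d + 1) m f) x (d + 1 + 1) =
        suff l (Act l (scheme l (d + 1) m f) x) (d + 1) := rfl
    rw [h1, suff_Act, hx 0 (by omega),
      class_reduce hn hh d m f (c 0) (hcgood 0 (by omega)) (suff l x),
      ihd (lsh l) (fun k hk => hL (k + 1) (by omega)) m (fun ad => f (c 0 :: ad))
        (fun k => c (k + 1)) q (suff l x)
        (fun k hk => hcgood (k + 1) (by omega)) hq1 hqm hm hcd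
        (fun k hk => hx (k + 1) (by omega))]
    rw [List.range_succ_eq_map, List.map_cons, List.map_map, List.cons_append]
    rfl

end mainlemma

section realize
variable {l : ℕ → ℕ}

noncomputable def realW (l : ℕ → ℕ) (L : List (ℕ × ℕ)) : List (Equiv.Perm (NSSpace l)) :=
  L.flatMap (fun p => List.replicate p.1 (alphaPerm l) ++ List.replicate p.2 (betaPerm l))

lemma perm_pow_apply (g : Equiv.Perm (NSSpace l)) (n : ℕ) (x : NSSpace l) :
    (g ^ n) x = (⇑g)^[n] x := by
  induction n generalizing x with
  | zero => rfl
  | succ n ih =>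
    rw [pow_succ, Function.iterate_succ_apply]
    rw [Equiv.Perm.mul_apply]
    exact ih (g x)

lemma realW_apply (L : List (ℕ × ℕ)) (x : NSSpace l) :
    ((realW l L).reverse.prod) x = Act l L x := by
  induction L generalizing x with
  | nil => rfl
  | cons p t ih =>
    have hsplit : realW l (p :: t) =
        (List.replicate p.1 (alphaPerm l) ++ List.replicate p.2 (betaPerm l)) ++ realW l t :=
      rfl
    rw [hsplit, List.reverse_append, List.prod_append, Equiv.Perm.mul_apply]
    rw [List.reverse_append, List.prod_append, Equiv.Perm.mul_apply]
    rw [List.reverse_replicate, List.reverse_replicate, List.prod_replicate,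
      List.prod_replicate, perm_pow_apply, perm_pow_apply]
    rw [Act_cons, ih]
    rfl

lemma realW_length (L : List (ℕ × ℕ)) :
    (realW l L).length = (L.map (fun p => p.1 + p.2)).sum := by
  induction L with
  | nil => rfl
  | cons p t ih =>
    have hsplit : realW l (p :: t) =
        (List.replicate p.1 (alphaPerm l) ++ List.replicate p.2 (betaPerm l)) ++ realW l t :=
      rfl
    rw [hsplit, List.length_append, List.length_append, List.length_replicate,
      List.length_replicate, ih, List.map_cons, List.sum_cons]

lemma alphaPerm_mem : alphaPerm l ∈ nsGens l := Or.inl rfl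

lemma betaPerm_mem : betaPerm l ∈ nsGens l := Or.inr (Or.inl rfl)

lemma realW_mem (L : List (ℕ × ℕ)) : ∀ g ∈ realW l L, g ∈ nsGens l := by
  induction L with
  | nil => intro g hg; simp [realW] at hg
  | cons p t ih =>
    intro g hg
    have hsplit : realW l (p :: t) =
        (List.replicate p.1 (alphaPerm l) ++ List.replicate p.2 (betaPerm l)) ++ realW l t :=
      rfl
    rw [hsplit, List.mem_append, List.mem_append] at hg
    rcases hg with (hg | hg) | hg
    · rw [List.eq_of_mem_replicate hg]; exact alphaPerm_mem
    · rw [List.eq_of_mem_replicate hg]; exact betaPerm_mem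
    · exact ih g hg

lemma bval_le_one (d : ℕ) :
    ∀ (l : ℕ → ℕ) (f : List ℕ → ℕ), (∀ ad, f ad ≤ 1) → ∀ Q, bval l d f Q ≤ 1 := by
  induction d with
  | zero => intro l f hf Q; exact hf _
  | succ d ih =>
    intro l f hf Q
    rw [bval]
    split
    · exact le_rfl
    · exact ih (lsh l) _ (fun ad => hf _) _

lemma scheme_cost (d m : ℕ) (f : List ℕ → ℕ) (hf : ∀ ad, f ad ≤ 1) :
    ((scheme l d m f).map (fun p => p.1 + p.2)).sum ≤ 2 * slen l d m := by
  have h : ∀ x ∈ (scheme l d m f).map (fun p => p.1 + p.2), x ≤ 2 := by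
    intro x hx
    simp only [scheme, List.map_map, List.mem_map] at hx
    obtain ⟨Q, _, hQ⟩ := hx
    have := bval_le_one d l f hf Q
    simp only [Function.comp] at hQ
    omega
  calc ((scheme l d m f).map (fun p => p.1 + p.2)).sum
      ≤ ((scheme l d m f).map (fun p => p.1 + p.2)).length • 2 :=
        List.sum_le_card_nsmul _ 2 h
    _ = (scheme l d m f).length * 2 := by rw [List.length_map]; simp [Nat.smul_one_eq_cast]
    _ = 2 * slen l d m := by
        rw [scheme, List.length_map, List.length_range]; ring

lemma slen_eq (d : ℕ) : ∀ (l : ℕ → ℕ) (m : ℕ),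
    slen l d m = m * ∏ k ∈ Finset.range d, l (k + 1) := by
  induction d with
  | zero => intro l m; simp [slen]
  | succ d ih =>
    intro l m
    rw [show slen l (d + 1) m = l 1 * slen (lsh l) d m from rfl, ih,
      Finset.prod_range_succ']
    show l 1 * (m * ∏ k ∈ Finset.range d, l (k + 1 + 1)) = _
    ring

lemma wordBall_finite {G : Type*} [Group G] {S : Set G} (hS : S.Finite) (r : ℕ) :
    (wordBall S r).Finite := by
  induction r with
  | zero =>
    refine Set.Finite.subset (Set.finite_singleton 1) ?_
    rintro g ⟨L, _, hlen, hprod⟩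
    have : L = [] := List.length_eq_zero_iff.1 (by omega)
    simp [this] at hprod
    simp [← hprod]
  | succ r ih =>
    refine Set.Finite.subset (Set.Finite.union ih
      (Set.Finite.biUnion hS (fun s _ => ih.image (fun g => s * g)))) ?_
    rintro g ⟨L, hmem, hlen, hprod⟩
    rcases L with _ | ⟨s, t⟩
    · exact Or.inl ⟨[], by simp, by simp, hprod⟩
    · right
      refine Set.mem_biUnion (hmem s (by simp)) ?_
      refine ⟨t.prod, ⟨t, fun x hx => hmem x (by simp [hx]), ?_, rfl⟩, ?_⟩
      · simp at hlen; omega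
      · simp at hprod; exact hprod

end realize

lemma prod_Icc_range (f : ℕ → ℕ) (i : ℕ) :
    ∏ j ∈ Finset.Icc 1 i, f j = ∏ k ∈ Finset.range i, f (k + 1) := by
  induction i with
  | zero => simp
  | succ i ih => rw [Finset.prod_range_succ, ← ih, Finset.prod_Icc_succ_top (by omega)]

lemma nsGens_finite (l : ℕ → ℕ) : (nsGens l).Finite := by
  refine Set.Finite.subset (Set.toFinite
    {alphaPerm l, betaPerm l, (alphaPerm l)⁻¹, (betaPerm l)⁻¹}) ?_
  rintro π (h | h | h | h)
  · exact Or.inl (Equiv.coe_fn_injective h)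
  · exact Or.inr (Or.inl (Equiv.coe_fn_injective h))
  · refine Or.inr (Or.inr (Or.inl ?_))
    have : π⁻¹ = alphaPerm l := Equiv.coe_fn_injective h
    rw [← this]; simp
  · refine Or.inr (Or.inr (Or.inr ?_))
    have : π⁻¹ = betaPerm l := Equiv.coe_fn_injective h
    rw [← this]; simp

end Paper

open Paper

set_option maxHeartbeats 2000000 in
theorem statement11 (l : ℕ → ℕ) (hl : ∀ i, 1 ≤ i → Even (l i) ∧ 2 ≤ l i)
    (i : ℕ) (hi : 1 ≤ i) (r : ℕ) (hr4 : 4 ≤ r) (hrl : r ≤ l (i + 1) / 2 - 1) :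
    (2 : ℝ) ^ ((2 : ℝ) ^ (-(i : ℝ) - 4) * (∏ j ∈ Finset.Icc 1 i, l j : ℕ) * r) ≤
      ((wordBall (nsGens l) ((∏ j ∈ Finset.Icc 1 i, l j) * r)).ncard : ℝ) := by
  classical
  have hL : ∀ k, 1 ≤ k → 0 < l k / 2 ∧ l k = 2 * (l k / 2) := by
    intro k hk
    obtain ⟨⟨c, hc⟩, h2⟩ := hl k hk
    constructor <;> omega
  have hi1 : 0 < l (i + 1) / 2 := (hL (i + 1) (by omega)).1
  set m := r / 2 with hmdef
  have hm1 : 1 ≤ m := by omega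
  -- index type for the bits
  set T := ((k : Fin i) → Fin (l (k.1 + 1) / 2)) × Fin m with hT
  haveI : ∀ k : Fin i, NeZero (l (k.1 + 1) / 2) :=
    fun k => ⟨by have := (hL (k.1 + 1) (by omega)).1; omega⟩
  -- the class function of an index
  set ct : T → ℕ → ℕ := fun t k =>
    if hk : k < i then (t.1 ⟨k, hk⟩ : ℕ) else l (i + 1) / 2 - ((t.2 : ℕ) + 1) with hct
  set enc : T → List ℕ := fun t => (List.range i).map (ct t) ++ [(t.2 : ℕ) + 1] with henc
  have enc_inj : Function.Injective enc := by
    intro t t' h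
    have hlen : ((List.range i).map (ct t)).length = ((List.range i).map (ct t')).length := by
      simp
    obtain ⟨h1, h2⟩ := List.append_inj h hlen
    have ht2 : t.2 = t'.2 := by
      have := List.head_eq_of_cons_eq h2
      exact Fin.ext (by omega)
    have ht1 : t.1 = t'.1 := by
      funext k
      have := (List.map_eq_map_iff.mp h1) k.1 (List.mem_range.mpr k.2)
      rw [hct] at this
      simp only [dif_pos k.2] at this
      exact Fin.ext (by simpa using this)
    exact Prod.ext ht1 ht2
  -- the bit functions
  set fε : (T → Bool) → List ℕ → ℕ := fun ε ad =>
    if h : ∃ t : T, enc t = ad then (if ε h.choose then 1 else 0) else 0 with hfε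
  have hfε1 : ∀ ε ad, fε ε ad ≤ 1 := by
    intro ε ad
    rw [hfε]
    dsimp only
    split
    · split <;> omega
    · omega
  have hfεenc : ∀ ε t, fε ε (enc t) = (if ε t then 1 else 0) := by
    intro ε t
    have hex : ∃ t' : T, enc t' = enc t := ⟨t, rfl⟩
    rw [hfε]
    dsimp only
    rw [dif_pos hex]
    have : hex.choose = t := enc_inj hex.choose_spec
    rw [this]
  -- the elements
  set g : (T → Bool) → Equiv.Perm (NSSpace l) :=
    fun ε => ((realW l (scheme l i m (fε ε))).reverse).prod with hg
  -- test points
  set xt : T → NSSpace l := fun t k =>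
    if k ≤ i then ((ct t k : ℕ) : ZMod (l (k + 1))) else 0 with hxt
  have hreadout : ∀ ε t, (g ε) (xt t) (i + 1) =
      ((if ε t then 1 else 0 : ℕ) : ZMod (l (i + 2))) := by
    intro ε t
    have hact : (g ε) (xt t) = Act l (scheme l i m (fε ε)) (xt t) := realW_apply _ _
    have hro := main_readout i l hL m (fε ε) (ct t) ((t.2 : ℕ) + 1) (xt t)
      (fun k hk => by rw [hct]; simp only [dif_pos hk]; exact (t.1 ⟨k, hk⟩).2)
      (by omega) (by have := t.2.2; omega) (by omega)
      (by rw [hct]; simp only [dif_neg (lt_irrefl i)])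
      (fun k hk => by rw [hxt]; simp only [if_pos hk])
    rw [hact, hro]
    have hx0 : xt t (i + 1) = 0 := by rw [hxt]; simp only [if_neg (by omega : ¬ i + 1 ≤ i)]
    rw [hx0, zero_add]
    congr 1
    exact hfεenc ε t
  haveI : Fact (1 < l (i + 2)) := ⟨by have := (hl (i + 2) (by omega)).2; omega⟩
  have hg_inj : Function.Injective g := by
    intro ε ε' he
    by_contra hne
    obtain ⟨t, ht⟩ : ∃ t, ε t ≠ ε' t := by
      by_contra hcon
      push_neg at hcon
      exact hne (funext hcon)
    have h1 := hreadout ε t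
    have h2 := hreadout ε' t
    rw [← he, h1] at h2
    rcases hεt : ε t <;> rcases hε't : ε' t <;>
      simp [hεt, hε't] at h2 ht
  -- membership in the ball
  have hprodIR : ∏ j ∈ Finset.Icc 1 i, l j = ∏ k ∈ Finset.range i, l (k + 1) :=
    prod_Icc_range l i
  have hmem : Set.range g ⊆ wordBall (nsGens l) ((∏ j ∈ Finset.Icc 1 i, l j) * r) := by
    rintro _ ⟨ε, rfl⟩
    refine ⟨(realW l (scheme l i m (fε ε))).reverse, ?_, ?_, rfl⟩
    · intro x hx
      exact realW_mem _ x (List.mem_reverse.1 hx)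
    · rw [List.length_reverse, realW_length]
      calc ((scheme l i m (fε ε)).map (fun p => p.1 + p.2)).sum
          ≤ 2 * slen l i m := scheme_cost i m _ (hfε1 ε)
        _ = 2 * (m * ∏ k ∈ Finset.range i, l (k + 1)) := by rw [slen_eq]
        _ ≤ (∏ j ∈ Finset.Icc 1 i, l j) * r := by
            rw [hprodIR]
            have : 2 * m ≤ r := by omega
            calc 2 * (m * ∏ k ∈ Finset.range i, l (k + 1))
                = (2 * m) * ∏ k ∈ Finset.range i, l (k + 1) := by ring
              _ ≤ r * ∏ k ∈ Finset.range i, l (k + 1) := Nat.mul_le_mul_right _ this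
              _ = (∏ k ∈ Finset.range i, l (k + 1)) * r := by ring
  -- counting
  set P := ∏ k ∈ Finset.range i, (l (k + 1) / 2) with hP
  have hcardT : Fintype.card T = P * m := by
    rw [show Fintype.card T = Fintype.card ((k : Fin i) → Fin (l (k.1 + 1) / 2)) *
      Fintype.card (Fin m) from Fintype.card_prod _ _, Fintype.card_pi, Fintype.card_fin]
    congr 1
    calc ∏ k : Fin i, Fintype.card (Fin (l (k.1 + 1) / 2))
        = ∏ k : Fin i, (l (k.1 + 1) / 2) := by
          refine Finset.prod_congr rfl ?_
          intro k _
          exact Fintype.card_fin _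
      _ = P := Fin.prod_univ_eq_prod_range (fun k => l (k + 1) / 2) i
  have hballfin : (wordBall (nsGens l) ((∏ j ∈ Finset.Icc 1 i, l j) * r)).Finite :=
    wordBall_finite (nsGens_finite l) _
  have hcount : 2 ^ (P * m) ≤
      (wordBall (nsGens l) ((∏ j ∈ Finset.Icc 1 i, l j) * r)).ncard := by
    calc 2 ^ (P * m) = Fintype.card (T → Bool) := by
          rw [Fintype.card_fun, Fintype.card_bool, hcardT]
      _ = Nat.card (T → Bool) := (Nat.card_eq_fintype_card).symm
      _ = Nat.card (Set.range g) := (Nat.card_range_of_injective hg_inj).symm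
      _ = (Set.range g).ncard := Nat.card_coe_set_eq _
      _ ≤ _ := Set.ncard_le_ncard hmem hballfin
  -- the product decomposition  V = 2^i * P
  have hV : (∏ k ∈ Finset.range i, l (k + 1)) = 2 ^ i * P := by
    calc ∏ k ∈ Finset.range i, l (k + 1)
        = ∏ k ∈ Finset.range i, (2 * (l (k + 1) / 2)) :=
          Finset.prod_congr rfl (fun k _ => (hL (k + 1) (by omega)).2)
      _ = (∏ _k ∈ Finset.range i, 2) * P := Finset.prod_mul_distrib
      _ = 2 ^ i * P := by rw [Finset.prod_const, Finset.card_range]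
  have hexp : (2 : ℝ) ^ (-(i : ℝ) - 4) * ((∏ j ∈ Finset.Icc 1 i, l j : ℕ) : ℝ) * (r : ℝ)
      ≤ ((P * m : ℕ) : ℝ) := by
    rw [hprodIR, hV]
    push_cast
    have h2i : (2 : ℝ) ^ (-(i : ℝ) - 4) * ((2 : ℝ) ^ (i : ℕ)) = 1 / 16 := by
      rw [show ((2:ℝ) ^ (i : ℕ)) = (2:ℝ) ^ ((i:ℕ):ℝ) from (Real.rpow_natCast 2 i).symm,
        ← Real.rpow_add (by norm_num)]
      rw [show (-(i:ℝ) - 4 + (i:ℕ)) = ((-4 : ℤ) : ℝ) by push_cast; ring]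
      rw [Real.rpow_intCast]
      norm_num
    have hr16 : (r : ℝ) ≤ 16 * (m : ℝ) := by
      have : r ≤ 16 * m := by omega
      exact_mod_cast this
    have hPpos : (0:ℝ) ≤ (P : ℝ) := by positivity
    calc (2:ℝ)^(-(i:ℝ)-4) * ((2:ℝ)^(i:ℕ) * (P:ℝ)) * (r:ℝ)
        = ((2:ℝ)^(-(i:ℝ)-4) * (2:ℝ)^(i:ℕ)) * ((P:ℝ) * (r:ℝ)) := by ring
      _ = ((P:ℝ) * (r:ℝ)) / 16 := by rw [h2i]; ring
      _ ≤ (P:ℝ) * (m:ℝ) := by nlinarith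
  calc (2 : ℝ) ^ ((2 : ℝ) ^ (-(i : ℝ) - 4) * ((∏ j ∈ Finset.Icc 1 i, l j : ℕ) : ℝ) * (r : ℝ))
      ≤ (2 : ℝ) ^ (((P * m : ℕ) : ℝ)) := Real.rpow_le_rpow_of_exponent_le (by norm_num) hexp
    _ = ((2 ^ (P * m) : ℕ) : ℝ) := by
        rw [Real.rpow_natCast]
        push_cast
        ring
    _ ≤ _ := by exact_mod_cast hcount
end

section
/- Let a group Γ act on a countable set X, let 𝒮 be the orbital Schreier graph of a basepoint, and let μ be a symmetric probability measure on Γ. Fix finite subsets J ⊆ B of 𝒮. Given a function h : X → [0,1] with h = 1 on J, h = 0 on the complement of B, and E_{𝒮,μ}(h,h) ≤ 1/2, there exists a function F_h : 𝒫_f(X) → [0,1] on the finite subsets of X such that ‖F_h‖²_{ℓ²(𝒫_f(X))} = 1, every A in the support of F_h satisfies J ⊆ A ⊆ B, and ∑_{s∈Γ} μ(s)‖s·F_h − F_h‖²_{ℓ²(𝒫_f(X))} ≤ (π²/2) · E_{𝒮,μ}(h,h). In particular, λ_{𝒫_f(𝒮),μ}(J; B) ≤ (π²/2) / R_{𝒮,μ}(J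 ↔ B^c). -/
open scoped Pointwise

open Paper

/-- The energy `E_{𝒮,μ}(h,h) = (1/2) ∑_{g ∈ Γ} ∑_{x} |h(x) - h(g·x)|² μ(g)`. -/
noncomputable def engy {Γ : Type*} [Group Γ] {X : Type*} [MulAction Γ X]
    (μ : Γ → ℝ) (h : X → ℝ) : ℝ :=
  (1 / 2) * ∑' p : Γ × X, |h p.2 - h (p.1 • p.2)| ^ 2 * μ p.1

/-- `λ_{𝒫_f(𝒮),μ}(J;B)`: the infimum of the Rayleigh quotients of nonzero functions on
finite subsets of `X` whose support consists of sets `A` with `J ⊆ A ⊆ B`. -/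
noncomputable def lamPf {Γ : Type*} [Group Γ] {X : Type*} [MulAction Γ X] [DecidableEq X]
    (μ : Γ → ℝ) (J B : Finset X) : ℝ :=
  sInf {q : ℝ | ∃ Ψ : Finset X → ℝ, Ψ ≠ 0 ∧ (∀ A, Ψ A ≠ 0 → J ⊆ A ∧ A ⊆ B) ∧
    q = (∑' s : Γ, μ s * ∑' A : Finset X, (Ψ (A.image fun x => s⁻¹ • x) - Ψ A) ^ 2) /
      (∑' A : Finset X, Ψ A ^ 2)}


private lemma aux19_one_sub_cos (t : ℝ) : 1 - Real.cos t ≤ t ^ 2 / 2 := by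
  have := Real.one_sub_sq_div_two_le_cos (x := t)
  linarith

private lemma aux19_prod_one_sub {ι : Type*} (C : Finset ι) (a : ι → ℝ)
    (h0 : ∀ x ∈ C, 0 ≤ a x) (h1 : ∀ x ∈ C, a x ≤ 1) :
    1 - ∏ x ∈ C, a x ≤ ∑ x ∈ C, (1 - a x) := by
  classical
  induction C using Finset.induction_on with
  | empty => simp
  | @insert y s hys ih =>
    rw [Finset.prod_insert hys, Finset.sum_insert hys]
    have h0y := h0 y (Finset.mem_insert_self _ _)
    have h1y := h1 y (Finset.mem_insert_self _ _)
    have h0s : ∀ x ∈ s, 0 ≤ a x := fun x hx => h0 x (Finset.mem_insert_of_mem hx)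
    have h1s : ∀ x ∈ s, a x ≤ 1 := fun x hx => h1 x (Finset.mem_insert_of_mem hx)
    have ihs := ih h0s h1s
    have hp0 : 0 ≤ ∏ x ∈ s, a x := Finset.prod_nonneg h0s
    have hp1 : ∏ x ∈ s, a x ≤ 1 := Finset.prod_le_one h0s h1s
    nlinarith

private lemma aux19_sum_prod_ite {ι : Type*} [DecidableEq ι] (C : Finset ι) (a b : ι → ℝ) :
    ∑ A ∈ C.powerset, ∏ x ∈ C, (if x ∈ A then a x else b x) = ∏ x ∈ C, (a x + b x) := by
  rw [Finset.prod_add]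
  refine Finset.sum_congr rfl fun t ht => ?_
  have htC : t ⊆ C := Finset.mem_powerset.mp ht
  have h1 : C.filter (· ∈ t) = t := by
    rw [Finset.filter_mem_eq_inter]; exact Finset.inter_eq_right.mpr htC
  rw [← Finset.prod_filter_mul_prod_filter_not C (· ∈ t), h1, ← Finset.sdiff_eq_filter]
  congr 1
  · exact Finset.prod_congr rfl fun x hx => if_pos hx
  · exact Finset.prod_congr rfl fun x hx => if_neg (Finset.mem_sdiff.mp hx).2

private lemma aux19_norm {ι : Type*} [DecidableEq ι] (C : Finset ι) (w : ι → ℝ) :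
    ∑ A ∈ C.powerset,
      (∏ x ∈ C, (if x ∈ A then Real.sin (w x) else Real.cos (w x))) ^ 2 = 1 := by
  have hc : ∀ A ∈ C.powerset,
      (∏ x ∈ C, (if x ∈ A then Real.sin (w x) else Real.cos (w x))) ^ 2
        = ∏ x ∈ C, (if x ∈ A then Real.sin (w x) ^ 2 else Real.cos (w x) ^ 2) := by
    intro A _
    rw [← Finset.prod_pow]
    exact Finset.prod_congr rfl fun x _ => (apply_ite (· ^ 2) _ _ _)
  rw [Finset.sum_congr rfl hc, aux19_sum_prod_ite]
  simp [Real.sin_sq_add_cos_sq]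

private lemma aux19_pair {ι : Type*} [DecidableEq ι] (C : Finset ι) (u v : ι → ℝ) :
    ∑ A ∈ C.powerset,
      ((∏ x ∈ C, (if x ∈ A then Real.sin (u x) else Real.cos (u x))) -
       (∏ x ∈ C, (if x ∈ A then Real.sin (v x) else Real.cos (v x)))) ^ 2
    = 2 - 2 * ∏ x ∈ C, Real.cos (u x - v x) := by
  have hcross : ∑ A ∈ C.powerset,
      (∏ x ∈ C, (if x ∈ A then Real.sin (u x) else Real.cos (u x))) *
      (∏ x ∈ C, (if x ∈ A then Real.sin (v x) else Real.cos (v x)))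
      = ∏ x ∈ C, Real.cos (u x - v x) := by
    have hc : ∀ A ∈ C.powerset,
        (∏ x ∈ C, (if x ∈ A then Real.sin (u x) else Real.cos (u x))) *
        (∏ x ∈ C, (if x ∈ A then Real.sin (v x) else Real.cos (v x)))
        = ∏ x ∈ C, (if x ∈ A then Real.sin (u x) * Real.sin (v x)
            else Real.cos (u x) * Real.cos (v x)) := by
      intro A _
      rw [← Finset.prod_mul_distrib]
      exact Finset.prod_congr rfl fun x _ => by by_cases hx : x ∈ A <;> simp [hx]
    rw [Finset.sum_congr rfl hc, aux19_sum_prod_ite]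
    exact Finset.prod_congr rfl fun x _ => by rw [Real.cos_sub]; ring
  have hexp : ∀ A ∈ C.powerset,
      ((∏ x ∈ C, (if x ∈ A then Real.sin (u x) else Real.cos (u x))) -
       (∏ x ∈ C, (if x ∈ A then Real.sin (v x) else Real.cos (v x)))) ^ 2
      = (∏ x ∈ C, (if x ∈ A then Real.sin (u x) else Real.cos (u x))) ^ 2 +
        (∏ x ∈ C, (if x ∈ A then Real.sin (v x) else Real.cos (v x))) ^ 2 -
        2 * ((∏ x ∈ C, (if x ∈ A then Real.sin (u x) else Real.cos (u x))) *
             (∏ x ∈ C, (if x ∈ A then Real.sin (v x) else Real.cos (v x)))) := by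
    intro A _; ring
  rw [Finset.sum_congr rfl hexp, Finset.sum_sub_distrib, Finset.sum_add_distrib,
    aux19_norm, aux19_norm, ← Finset.mul_sum, hcross]
  ring

private lemma aux19_summableE
    {Γ : Type*} [Group Γ] {X : Type*} [DecidableEq X] [MulAction Γ X]
    (μ : Γ → ℝ) (hμ0 : ∀ g, 0 ≤ μ g) (hμs : Summable μ)
    (B : Finset X) (f : X → ℝ) (M : ℝ) (hM : ∀ x, |f x| ≤ M)
    (hf0 : ∀ x ∉ B, f x = 0) :
    Summable (fun p : Γ × X => (f p.2 - f (p.1 • p.2)) ^ 2 * μ p.1) := by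
  classical
  rcases isEmpty_or_nonempty X with hX | hX
  · have : (fun p : Γ × X => (f p.2 - f (p.1 • p.2)) ^ 2 * μ p.1) = 0 :=
      funext fun p => isEmptyElim p.2
    rw [this]; exact summable_zero
  obtain ⟨x0⟩ := hX
  have hM0 : 0 ≤ M := le_trans (abs_nonneg _) (hM x0)
  set m1 : Γ × X → ℝ := fun p => (μ p.1 * (4 * M ^ 2)) * (if p.2 ∈ B then (1:ℝ) else 0)
    with hm1
  set m2 : Γ × X → ℝ := fun p => (μ p.1 * (4 * M ^ 2)) * (if p.1 • p.2 ∈ B then (1:ℝ) else 0)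
    with hm2
  have hc0 : ∀ s : Γ, 0 ≤ μ s * (4 * M ^ 2) := fun s =>
    mul_nonneg (hμ0 s) (by positivity)
  have hm1s : Summable m1 := by
    refine Summable.mul_of_nonneg (f := fun s : Γ => μ s * (4 * M ^ 2))
      (g := fun x : X => if x ∈ B then (1:ℝ) else 0)
      (hμs.mul_right _) (summable_of_ne_finset_zero (s := B) fun x hx => if_neg hx)
      hc0 (fun x => by dsimp only; split_ifs <;> norm_num)
  have hm2s : Summable m2 := by
    rw [hm2]
    refine (summable_prod_of_nonneg ?_).mpr ⟨?_, ?_⟩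
    · intro p
      refine mul_nonneg (hc0 _) ?_
      dsimp only; split_ifs <;> norm_num
    · intro s
      refine summable_of_ne_finset_zero (s := B.image fun b => s⁻¹ • b) fun x hx => ?_
      have : s • x ∉ B := by
        intro hmem
        exact hx (Finset.mem_image.mpr ⟨s • x, hmem, by simp⟩)
      simp [this]
    · refine Summable.of_nonneg_of_le (fun s => tsum_nonneg fun x => mul_nonneg (hc0 _)
        (by dsimp only; split_ifs <;> norm_num)) (fun s => ?_)
        ((hμs.mul_right (4 * M ^ 2)).mul_right (B.card : ℝ))
      have hvan : ∀ x ∉ (B.image fun b => s⁻¹ • b),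
          (μ s * (4 * M ^ 2)) * (if s • x ∈ B then (1:ℝ) else 0) = 0 := by
        intro x hx
        have : s • x ∉ B := fun hmem => hx (Finset.mem_image.mpr ⟨s • x, hmem, by simp⟩)
        simp [this]
      rw [tsum_eq_sum hvan]
      calc ∑ x ∈ B.image fun b => s⁻¹ • b, (μ s * (4 * M ^ 2)) * (if s • x ∈ B then (1:ℝ) else 0)
          ≤ ∑ _x ∈ B.image fun b => s⁻¹ • b, μ s * (4 * M ^ 2) := by
            refine Finset.sum_le_sum fun x _ => ?_
            have : (if s • x ∈ B then (1:ℝ) else 0) ≤ 1 := by split_ifs <;> norm_num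
            nlinarith [hc0 s]
        _ = ((B.image fun b => s⁻¹ • b).card : ℝ) * (μ s * (4 * M ^ 2)) := by
            rw [Finset.sum_const, nsmul_eq_mul]
        _ ≤ (B.card : ℝ) * (μ s * (4 * M ^ 2)) := by
            have := Finset.card_image_le (s := B) (f := fun b => s⁻¹ • b)
            have h2 : ((B.image fun b => s⁻¹ • b).card : ℝ) ≤ (B.card : ℝ) := by
              exact_mod_cast this
            nlinarith [hc0 s]
        _ = μ s * (4 * M ^ 2) * (B.card : ℝ) := by ring
  refine Summable.of_nonneg_of_le (fun p => mul_nonneg (sq_nonneg _) (hμ0 _)) (fun p => ?_)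
    (hm1s.add hm2s)
  by_cases h2 : p.2 ∈ B
  · have hb : (f p.2 - f (p.1 • p.2)) ^ 2 ≤ 4 * M ^ 2 := by
      have a1 := abs_le.mp (hM p.2)
      have a2 := abs_le.mp (hM (p.1 • p.2))
      nlinarith [a1.1, a1.2, a2.1, a2.2]
    have : m1 p = μ p.1 * (4 * M ^ 2) := by rw [hm1]; simp [h2]
    have hm2nn : 0 ≤ m2 p := mul_nonneg (hc0 _) (by split_ifs <;> norm_num)
    have : (f p.2 - f (p.1 • p.2)) ^ 2 * μ p.1 ≤ m1 p := by
      rw [this]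
      calc (f p.2 - f (p.1 • p.2)) ^ 2 * μ p.1 ≤ (4 * M ^ 2) * μ p.1 :=
            mul_le_mul_of_nonneg_right hb (hμ0 _)
        _ = μ p.1 * (4 * M ^ 2) := by ring
    linarith
  · by_cases h3 : p.1 • p.2 ∈ B
    · have hb : (f p.2 - f (p.1 • p.2)) ^ 2 ≤ 4 * M ^ 2 := by
        have a1 := abs_le.mp (hM p.2)
        have a2 := abs_le.mp (hM (p.1 • p.2))
        nlinarith [a1.1, a1.2, a2.1, a2.2]
      have he2 : m2 p = μ p.1 * (4 * M ^ 2) := by rw [hm2]; simp [h3]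
      have hm1nn : 0 ≤ m1 p := mul_nonneg (hc0 _) (by split_ifs <;> norm_num)
      have : (f p.2 - f (p.1 • p.2)) ^ 2 * μ p.1 ≤ m2 p := by
        rw [he2]
        calc (f p.2 - f (p.1 • p.2)) ^ 2 * μ p.1 ≤ (4 * M ^ 2) * μ p.1 :=
              mul_le_mul_of_nonneg_right hb (hμ0 _)
          _ = μ p.1 * (4 * M ^ 2) := by ring
      linarith
    · have : f p.2 - f (p.1 • p.2) = 0 := by rw [hf0 _ h2, hf0 _ h3]; ring
      rw [this]
      have hm1nn : 0 ≤ m1 p := mul_nonneg (hc0 _) (by split_ifs <;> norm_num)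
      have hm2nn : 0 ≤ m2 p := mul_nonneg (hc0 _) (by split_ifs <;> norm_num)
      have hz : (0:ℝ) ^ 2 * μ p.1 = 0 := by ring
      rw [hz]
      linarith

private lemma aux19_main
    {Γ : Type*} [Group Γ] {X : Type*} [DecidableEq X] [MulAction Γ X]
    (μ : Γ → ℝ) (hμ0 : ∀ g, 0 ≤ μ g) (hμsymm : ∀ g, μ g⁻¹ = μ g) (hμs : Summable μ)
    (J B : Finset X) (hJB : J ⊆ B)
    (h : X → ℝ) (hrange : ∀ x, h x ∈ Set.Icc (0 : ℝ) 1)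
    (hJ : ∀ x ∈ J, h x = 1) (hB : ∀ x, x ∉ B → h x = 0) :
    ∃ F : Finset X → ℝ,
      (∀ A, F A ∈ Set.Icc (0 : ℝ) 1) ∧
      (∑' A : Finset X, F A ^ 2) = 1 ∧
      (∀ A, F A ≠ 0 → J ⊆ A ∧ A ⊆ B) ∧
      (∑' s : Γ, μ s * ∑' A : Finset X, (F (A.image fun x => s⁻¹ • x) - F A) ^ 2) ≤
        Real.pi ^ 2 / 2 * engy μ h := by
  classical
  set θ : X → ℝ := fun x => Real.pi / 2 * h x with hθdef
  have hpi := Real.pi_pos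
  have hθ0 : ∀ x, 0 ≤ θ x := fun x => mul_nonneg (by positivity) (hrange x).1
  have hθle : ∀ x, θ x ≤ Real.pi / 2 := fun x => by
    have h1 := (hrange x).2
    calc θ x ≤ Real.pi / 2 * 1 := by
          exact mul_le_mul_of_nonneg_left h1 (by positivity)
      _ = Real.pi / 2 := mul_one _
  have hθB : ∀ x ∉ B, θ x = 0 := fun x hx => by
    simp only [hθdef, hB x hx, mul_zero]
  set F : Finset X → ℝ := fun A =>
    if A ⊆ B then ∏ x ∈ B, (if x ∈ A then Real.sin (θ x) else Real.cos (θ x)) else 0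
    with hFdef
  have hsin01 : ∀ x, Real.sin (θ x) ∈ Set.Icc (0:ℝ) 1 := fun x =>
    ⟨Real.sin_nonneg_of_nonneg_of_le_pi (hθ0 x) ((hθle x).trans (by linarith)),
     Real.sin_le_one _⟩
  have hcos01 : ∀ x, Real.cos (θ x) ∈ Set.Icc (0:ℝ) 1 := fun x =>
    ⟨Real.cos_nonneg_of_mem_Icc ⟨by linarith [hθ0 x], hθle x⟩, Real.cos_le_one _⟩
  have hfac0 : ∀ (A : Finset X) (x : X),
      0 ≤ (if x ∈ A then Real.sin (θ x) else Real.cos (θ x)) := fun A x => by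
    split_ifs
    exacts [(hsin01 x).1, (hcos01 x).1]
  have hfac1 : ∀ (A : Finset X) (x : X),
      (if x ∈ A then Real.sin (θ x) else Real.cos (θ x)) ≤ 1 := fun A x => by
    split_ifs
    exacts [(hsin01 x).2, (hcos01 x).2]
  have hrange' : ∀ A, F A ∈ Set.Icc (0:ℝ) 1 := by
    intro A
    simp only [hFdef]
    by_cases hAB : A ⊆ B
    · rw [if_pos hAB]
      exact ⟨Finset.prod_nonneg fun x _ => hfac0 A x,
        Finset.prod_le_one (fun x _ => hfac0 A x) (fun x _ => hfac1 A x)⟩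
    · rw [if_neg hAB]; exact ⟨le_refl _, by norm_num⟩
  have hrep : ∀ (D : Finset X), B ⊆ D → ∀ A : Finset X, A ⊆ D →
      F A = ∏ x ∈ D, (if x ∈ A then Real.sin (θ x) else Real.cos (θ x)) := by
    intro D hBD A hAD
    by_cases hAB : A ⊆ B
    · simp only [hFdef, if_pos hAB]
      exact Finset.prod_subset hBD fun x hxD hxB => by
        rw [if_neg (fun hxA => hxB (hAB hxA)), hθB x hxB, Real.cos_zero]
    · simp only [hFdef, if_neg hAB]
      obtain ⟨x0, hx0A, hx0B⟩ := Finset.not_subset.mp hAB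
      exact (Finset.prod_eq_zero (hAD hx0A)
        (by rw [if_pos hx0A, hθB x0 hx0B, Real.sin_zero])).symm
  have hsupp : ∀ A, F A ≠ 0 → J ⊆ A ∧ A ⊆ B := by
    intro A hFA
    have hAB : A ⊆ B := by
      by_contra hc
      exact hFA (by simp only [hFdef, if_neg hc])
    refine ⟨?_, hAB⟩
    intro x hxJ
    by_contra hxA
    apply hFA
    simp only [hFdef, if_pos hAB]
    refine Finset.prod_eq_zero (hJB hxJ) ?_
    rw [if_neg hxA]
    have : θ x = Real.pi / 2 := by simp [hθdef, hJ x hxJ]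
    rw [this, Real.cos_pi_div_two]
  have hnorm : (∑' A : Finset X, F A ^ 2) = 1 := by
    have hvan : ∀ A ∉ B.powerset, F A ^ 2 = 0 := by
      intro A hA
      have : ¬ A ⊆ B := fun hc => hA (Finset.mem_powerset.mpr hc)
      simp [hFdef, this]
    rw [tsum_eq_sum hvan]
    have hc : ∀ A ∈ B.powerset, F A ^ 2 =
        (∏ x ∈ B, (if x ∈ A then Real.sin (θ x) else Real.cos (θ x))) ^ 2 := by
      intro A hA
      rw [hrep B subset_rfl A (Finset.mem_powerset.mp hA)]
    rw [Finset.sum_congr rfl hc, aux19_norm]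
  -- summability setup
  have hEsum : Summable (fun p : Γ × X => (h p.2 - h (p.1 • p.2)) ^ 2 * μ p.1) :=
    aux19_summableE μ hμ0 hμs B h 1
      (fun x => by rw [abs_of_nonneg (hrange x).1]; exact (hrange x).2) hB
  have hE'sum : Summable (fun p : Γ × X => (h p.2 - h (p.1⁻¹ • p.2)) ^ 2 * μ p.1) := by
    have he := ((Equiv.prodCongr (Equiv.inv Γ) (Equiv.refl X)).summable_iff
      (f := fun p : Γ × X => (h p.2 - h (p.1 • p.2)) ^ 2 * μ p.1)).mpr hEsum
    refine he.congr fun p => ?_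
    simp [Equiv.prodCongr, hμsymm]
  have hE'nn : ∀ p : Γ × X, 0 ≤ (h p.2 - h (p.1⁻¹ • p.2)) ^ 2 * μ p.1 := fun p =>
    mul_nonneg (sq_nonneg _) (hμ0 _)
  have hpairE := (summable_prod_of_nonneg hE'nn).mp hE'sum
  -- per-s estimate
  have hkey : ∀ s : Γ, (∑' A : Finset X, (F (A.image fun x => s⁻¹ • x) - F A) ^ 2)
      ≤ Real.pi ^ 2 / 4 * ∑ x ∈ (B ∪ B.image fun x => s • x), (h x - h (s⁻¹ • x)) ^ 2 := by
    intro s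
    set C : Finset X := B ∪ B.image (fun x => s • x) with hC
    have hBC : B ⊆ C := Finset.subset_union_left
    have hinv : Function.Injective (fun x : X => s⁻¹ • x) := fun a b hab => by
      simpa using congrArg (fun y => s • y) hab
    have hGrep : ∀ A : Finset X, A ⊆ C → F (A.image fun x => s⁻¹ • x) =
        ∏ x ∈ C, (if x ∈ A then Real.sin (θ (s⁻¹ • x)) else Real.cos (θ (s⁻¹ • x))) := by
      intro A hAC
      have hBD : B ⊆ C.image (fun x => s⁻¹ • x) := by
        intro b hb
        exact Finset.mem_image.mpr ⟨s • b,
          Finset.mem_union_right _ (Finset.mem_image_of_mem _ hb), by simp⟩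
      have hAD : A.image (fun x => s⁻¹ • x) ⊆ C.image (fun x => s⁻¹ • x) :=
        Finset.image_subset_image hAC
      rw [hrep _ hBD _ hAD, Finset.prod_image (fun a _ b _ hab => hinv hab)]
      refine Finset.prod_congr rfl fun x hx => ?_
      simp only [hinv.mem_finset_image]
    have hvan : ∀ A : Finset X, A ∉ C.powerset →
        (F (A.image fun x => s⁻¹ • x) - F A) ^ 2 = 0 := by
      intro A hA
      have hAC : ¬ A ⊆ C := fun hc => hA (Finset.mem_powerset.mpr hc)
      have h1 : F A = 0 := by
        by_contra hne; exact hAC ((hsupp A hne).2.trans hBC)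
      have h2 : F (A.image fun x => s⁻¹ • x) = 0 := by
        by_contra hne
        have hsub := (hsupp _ hne).2
        apply hAC
        intro y hy
        have : s⁻¹ • y ∈ B := hsub (Finset.mem_image_of_mem _ hy)
        exact Finset.mem_union_right _ (Finset.mem_image.mpr ⟨s⁻¹ • y, this, by simp⟩)
      rw [h1, h2, sub_zero]
      norm_num
    rw [tsum_eq_sum hvan]
    have hterm : ∀ A ∈ C.powerset, (F (A.image fun x => s⁻¹ • x) - F A) ^ 2 =
        ((∏ x ∈ C, (if x ∈ A then Real.sin (θ x) else Real.cos (θ x))) -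
         (∏ x ∈ C, (if x ∈ A then Real.sin (θ (s⁻¹ • x)) else Real.cos (θ (s⁻¹ • x))))) ^ 2 := by
      intro A hA
      rw [hGrep A (Finset.mem_powerset.mp hA), hrep C hBC A (Finset.mem_powerset.mp hA)]
      ring
    rw [Finset.sum_congr rfl hterm, aux19_pair C (fun x => θ x) (fun x => θ (s⁻¹ • x))]
    have hcos1 : ∀ x ∈ C, Real.cos (θ x - θ (s⁻¹ • x)) ≤ 1 := fun x _ => Real.cos_le_one _
    have hcos0 : ∀ x ∈ C, 0 ≤ Real.cos (θ x - θ (s⁻¹ • x)) := fun x _ =>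
      Real.cos_nonneg_of_mem_Icc
        ⟨by linarith [hθ0 x, hθle (s⁻¹ • x)], by linarith [hθ0 (s⁻¹ • x), hθle x]⟩
    have h1 := aux19_prod_one_sub C _ hcos0 hcos1
    have h2 : ∑ x ∈ C, (1 - Real.cos (θ x - θ (s⁻¹ • x)))
        ≤ ∑ x ∈ C, (θ x - θ (s⁻¹ • x)) ^ 2 / 2 :=
      Finset.sum_le_sum fun x _ => aux19_one_sub_cos _
    have h4 : ∑ x ∈ C, (θ x - θ (s⁻¹ • x)) ^ 2 / 2
        = Real.pi ^ 2 / 8 * ∑ x ∈ C, (h x - h (s⁻¹ • x)) ^ 2 := by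
      rw [Finset.mul_sum]
      refine Finset.sum_congr rfl fun x _ => ?_
      simp only [hθdef]
      ring
    rw [h4] at h2
    linarith
  -- fiberwise sums
  have hggeq : ∀ s : Γ, (∑' x : X, (h x - h (s⁻¹ • x)) ^ 2 * μ s)
      = μ s * ∑ x ∈ (B ∪ B.image fun x => s • x), (h x - h (s⁻¹ • x)) ^ 2 := by
    intro s
    have hvan : ∀ x ∉ (B ∪ B.image fun x => s • x), (h x - h (s⁻¹ • x)) ^ 2 * μ s = 0 := by
      intro x hx
      have hx1 : x ∉ B := fun hc => hx (Finset.mem_union_left _ hc)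
      have hx2 : s⁻¹ • x ∉ B := by
        intro hc
        exact hx (Finset.mem_union_right _ (Finset.mem_image.mpr ⟨s⁻¹ • x, hc, by simp⟩))
      rw [hB x hx1, hB _ hx2]
      norm_num
    rw [tsum_eq_sum hvan, ← Finset.sum_mul, mul_comm]
  have hT : ∀ s : Γ, μ s * (∑' A : Finset X, (F (A.image fun x => s⁻¹ • x) - F A) ^ 2)
      ≤ Real.pi ^ 2 / 4 * ∑' x : X, (h x - h (s⁻¹ • x)) ^ 2 * μ s := by
    intro s
    rw [hggeq s]
    have hm := mul_le_mul_of_nonneg_left (hkey s) (hμ0 s)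
    calc μ s * (∑' A : Finset X, (F (A.image fun x => s⁻¹ • x) - F A) ^ 2)
        ≤ μ s * (Real.pi ^ 2 / 4 * ∑ x ∈ (B ∪ B.image fun x => s • x),
            (h x - h (s⁻¹ • x)) ^ 2) := hm
      _ = Real.pi ^ 2 / 4 * (μ s * ∑ x ∈ (B ∪ B.image fun x => s • x),
            (h x - h (s⁻¹ • x)) ^ 2) := by ring
  have hTnn : ∀ s : Γ, 0 ≤ μ s * (∑' A : Finset X, (F (A.image fun x => s⁻¹ • x) - F A) ^ 2) :=
    fun s => mul_nonneg (hμ0 s) (tsum_nonneg fun A => sq_nonneg _)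
  have hrhs_sum : Summable (fun s : Γ =>
      Real.pi ^ 2 / 4 * ∑' x : X, (h x - h (s⁻¹ • x)) ^ 2 * μ s) := by
    exact (hpairE.2.mul_left _)
  have hlhs_sum : Summable (fun s : Γ =>
      μ s * (∑' A : Finset X, (F (A.image fun x => s⁻¹ • x) - F A) ^ 2)) :=
    Summable.of_nonneg_of_le hTnn hT hrhs_sum
  refine ⟨F, hrange', hnorm, hsupp, ?_⟩
  calc (∑' s : Γ, μ s * ∑' A : Finset X, (F (A.image fun x => s⁻¹ • x) - F A) ^ 2)
      ≤ ∑' s : Γ, Real.pi ^ 2 / 4 * ∑' x : X, (h x - h (s⁻¹ • x)) ^ 2 * μ s :=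
        Summable.tsum_le_tsum hT hlhs_sum hrhs_sum
    _ = Real.pi ^ 2 / 4 * ∑' s : Γ, ∑' x : X, (h x - h (s⁻¹ • x)) ^ 2 * μ s := tsum_mul_left
    _ = Real.pi ^ 2 / 4 * ∑' p : Γ × X, (h p.2 - h (p.1⁻¹ • p.2)) ^ 2 * μ p.1 := by
        rw [← Summable.tsum_prod' hE'sum hpairE.1]
    _ = Real.pi ^ 2 / 4 * ∑' p : Γ × X, (h p.2 - h (p.1 • p.2)) ^ 2 * μ p.1 := by
        congr 1
        have he := (Equiv.prodCongr (Equiv.inv Γ) (Equiv.refl X)).tsum_eq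
          (fun p : Γ × X => (h p.2 - h (p.1 • p.2)) ^ 2 * μ p.1)
        rw [← he]
        refine tsum_congr fun p => ?_
        simp [Equiv.prodCongr, hμsymm]
    _ = Real.pi ^ 2 / 2 * engy μ h := by
        rw [engy]
        rw [tsum_congr (fun p : Γ × X => by
          rw [sq_abs] :
          ∀ p : Γ × X, |h p.2 - h (p.1 • p.2)| ^ 2 * μ p.1
            = (h p.2 - h (p.1 • p.2)) ^ 2 * μ p.1)]
        ring

theorem statement19
    (Γ : Type) [Group Γ] (X : Type) [Countable X] [DecidableEq X] [MulAction Γ X]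
    (o : X) (htrans : ∀ x : X, ∃ g : Γ, g • o = x)
    (μ : Γ → ℝ) (hμ : IsSymmProb μ)
    (J B : Finset X) (hJB : J ⊆ B)
    (h : X → ℝ) (hrange : ∀ x, h x ∈ Set.Icc (0 : ℝ) 1)
    (hJ : ∀ x ∈ J, h x = 1) (hB : ∀ x, x ∉ B → h x = 0)
    (hE : engy μ h ≤ 1 / 2) :
    (∃ F : Finset X → ℝ,
      (∀ A, F A ∈ Set.Icc (0 : ℝ) 1) ∧
      (∑' A : Finset X, F A ^ 2) = 1 ∧
      (∀ A, F A ≠ 0 → J ⊆ A ∧ A ⊆ B) ∧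
      (∑' s : Γ, μ s * ∑' A : Finset X, (F (A.image fun x => s⁻¹ • x) - F A) ^ 2) ≤
        Real.pi ^ 2 / 2 * engy μ h) ∧
    lamPf μ J B ≤ (Real.pi ^ 2 / 2) *
      sInf {e : ℝ | ∃ h' : X → ℝ, (∀ x ∈ J, h' x = 1) ∧ (∀ x, x ∉ B → h' x = 0) ∧
        e = engy μ h'} := by
  classical
  have hμ0 := hμ.1
  have hμsymm := hμ.2.1
  have hμs : Summable μ := hμ.2.2.summable
  obtain ⟨F, hFr, hFn, hFs, hFd⟩ := aux19_main μ hμ0 hμsymm hμs J B hJB h hrange hJ hB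
  refine ⟨⟨F, hFr, hFn, hFs, hFd⟩, ?_⟩
  have hc : (0:ℝ) < Real.pi ^ 2 / 2 := by positivity
  have hSne : Set.Nonempty {e : ℝ | ∃ h' : X → ℝ, (∀ x ∈ J, h' x = 1) ∧
      (∀ x, x ∉ B → h' x = 0) ∧ e = engy μ h'} := ⟨engy μ h, h, hJ, hB, rfl⟩
  have hbdd : BddBelow {q : ℝ | ∃ Ψ : Finset X → ℝ, Ψ ≠ 0 ∧ (∀ A, Ψ A ≠ 0 → J ⊆ A ∧ A ⊆ B) ∧
      q = (∑' s : Γ, μ s * ∑' A : Finset X, (Ψ (A.image fun x => s⁻¹ • x) - Ψ A) ^ 2) /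
        (∑' A : Finset X, Ψ A ^ 2)} := by
    refine ⟨0, ?_⟩
    rintro q ⟨Ψ, -, -, rfl⟩
    exact div_nonneg (tsum_nonneg fun s => mul_nonneg (hμ0 s)
      (tsum_nonneg fun A => sq_nonneg _)) (tsum_nonneg fun A => sq_nonneg _)
  have key : ∀ e ∈ {e : ℝ | ∃ h' : X → ℝ, (∀ x ∈ J, h' x = 1) ∧
      (∀ x, x ∉ B → h' x = 0) ∧ e = engy μ h'}, lamPf μ J B ≤ Real.pi ^ 2 / 2 * e := by
    rintro e ⟨h', hJ', hB', rfl⟩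
    -- clamp h' to [0,1]
    set h'' : X → ℝ := fun x => max 0 (min 1 (h' x)) with hh''
    have hr'' : ∀ x, h'' x ∈ Set.Icc (0:ℝ) 1 := fun x =>
      ⟨le_max_left _ _, max_le (by norm_num) (min_le_left _ _)⟩
    have hJ'' : ∀ x ∈ J, h'' x = 1 := fun x hx => by
      simp only [hh'', hJ' x hx]; norm_num
    have hB'' : ∀ x, x ∉ B → h'' x = 0 := fun x hx => by
      simp only [hh'', hB' x hx]; norm_num
    -- summability of both energies
    have hM' : ∀ x, |h' x| ≤ ∑ y ∈ B, |h' y| := by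
      intro x
      by_cases hx : x ∈ B
      · exact Finset.single_le_sum (f := fun y => |h' y|) (fun y _ => abs_nonneg _) hx
      · rw [hB' x hx, abs_zero]
        exact Finset.sum_nonneg fun y _ => abs_nonneg _
    have hsum' : Summable (fun p : Γ × X => (h' p.2 - h' (p.1 • p.2)) ^ 2 * μ p.1) :=
      aux19_summableE μ hμ0 hμs B h' _ hM' hB'
    have hsum'' : Summable (fun p : Γ × X => (h'' p.2 - h'' (p.1 • p.2)) ^ 2 * μ p.1) :=
      aux19_summableE μ hμ0 hμs B h'' 1
        (fun x => by rw [abs_of_nonneg (hr'' x).1]; exact (hr'' x).2) hB''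
    -- clamping is a contraction
    have hlip : ∀ a b : ℝ, |max 0 (min 1 a) - max 0 (min 1 b)| ≤ |a - b| := by
      intro a b
      calc |max 0 (min 1 a) - max 0 (min 1 b)|
          = |max (min 1 a) 0 - max (min 1 b) 0| := by rw [max_comm 0, max_comm 0]
        _ ≤ |min 1 a - min 1 b| := abs_max_sub_max_le_abs _ _ _
        _ ≤ max |1 - 1| |a - b| := abs_min_sub_min_le_max _ _ _ _
        _ = |a - b| := by rw [sub_self, abs_zero]; exact max_eq_right (abs_nonneg _)
    have hmono : engy μ h'' ≤ engy μ h' := by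
      rw [engy, engy]
      refine mul_le_mul_of_nonneg_left (Summable.tsum_le_tsum (fun p => ?_)
        (hsum''.congr fun p => by rw [sq_abs])
        (hsum'.congr fun p => by rw [sq_abs])) (by norm_num)
      refine mul_le_mul_of_nonneg_right ?_ (hμ0 p.1)
      exact pow_le_pow_left₀ (abs_nonneg _) (hlip (h' p.2) (h' (p.1 • p.2))) 2
    obtain ⟨F', hFr', hFn', hFs', hFd'⟩ := aux19_main μ hμ0 hμsymm hμs J B hJB h'' hr'' hJ'' hB''
    have hne : F' ≠ 0 := by
      intro h0
      rw [h0] at hFn'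
      simp at hFn'
    have hmem : (∑' s : Γ, μ s * ∑' A : Finset X, (F' (A.image fun x => s⁻¹ • x) - F' A) ^ 2) /
        (∑' A : Finset X, F' A ^ 2) ∈ {q : ℝ | ∃ Ψ : Finset X → ℝ, Ψ ≠ 0 ∧
          (∀ A, Ψ A ≠ 0 → J ⊆ A ∧ A ⊆ B) ∧
          q = (∑' s : Γ, μ s * ∑' A : Finset X, (Ψ (A.image fun x => s⁻¹ • x) - Ψ A) ^ 2) /
            (∑' A : Finset X, Ψ A ^ 2)} := ⟨F', hne, fun A hA => hFs' A hA, rfl⟩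
    have h1 := csInf_le hbdd hmem
    rw [hFn', div_one] at h1
    calc lamPf μ J B ≤ _ := h1
      _ ≤ Real.pi ^ 2 / 2 * engy μ h'' := hFd'
      _ ≤ Real.pi ^ 2 / 2 * engy μ h' := mul_le_mul_of_nonneg_left hmono hc.le
  have hdiv : lamPf μ J B / (Real.pi ^ 2 / 2) ≤ sInf {e : ℝ | ∃ h' : X → ℝ,
      (∀ x ∈ J, h' x = 1) ∧ (∀ x, x ∉ B → h' x = 0) ∧ e = engy μ h'} := by
    refine le_csInf hSne fun e he => ?_
    rw [div_le_iff₀ hc]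
    exact (key e he).trans_eq (mul_comm _ _)
  calc lamPf μ J B = lamPf μ J B / (Real.pi ^ 2 / 2) * (Real.pi ^ 2 / 2) :=
        (div_mul_cancel₀ _ hc.ne').symm
    _ ≤ sInf {e : ℝ | ∃ h' : X → ℝ, (∀ x ∈ J, h' x = 1) ∧ (∀ x, x ∉ B → h' x = 0) ∧
          e = engy μ h'} * (Real.pi ^ 2 / 2) :=
        mul_le_mul_of_nonneg_right hdiv hc.le
    _ = _ := mul_comm _ _
end
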